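/- arXiv:1703.02373 — 8 statements merged into one kernel-verified Lean document; each statement's English description precedes it below -/
import Mathlib

section
/- Let q : [0,1] → ℝ be nonnegative, differentiable and single-barrier with transition point x₀ ∈ [0,1] (i.e. q is monotone increasing on [0,x₀] and monotone decreasing on [x₀,1]), and suppose |q'(x)| ≤ (2/15)·min{q(0), q(1)} for all x ∈ [0,1]. Let 1 ≤ m < n be integers and let z_m, z_n > 0 satisfy φ_q(1, z_m) = mπ and φ_q(1, z_n) = nπ (so λ_m = z_m² and λ_n = z_n² are the m-th and n-th Dirichlet eigenvalues of −y'' + q y = λ y on [0,1]). If z_n > z_m and z_m² ≥ 11·q(x₀), then z_n²/z_m² ≤ n²/m². -/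
/-!
Replace the Prüfer angle `φ` by the angle `Θ` with `tan Θ = (√(z² - q) / z) tan φ`, adapted to
the local frequency `√(z² - q)`. It has the same boundary values `0` and `kπ`, and
`Θ' = √(z² - q) + O(|q'| / (z² - q))`, so with `c = min (q 0) (q 1)` the error is at most
`B = c / (30 (z_m² - q x₀))` for both eigenvalues. Since `q ≥ c`, the combination
`z_m Θ_n - z_n Θ_m` grows at rate at least `c (z_n² - z_m²) / (2 z_n z_m) - (z_m + z_n) B`, and
the hypothesis `z_m² ≥ 11 q x₀` makes this nonnegative. Hence `z_n m π ≤ z_m n π`.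
-/

open Real Set

lemma mul_cos_sq_add_mul_sin_sq_pos {a b : ℝ} (ha : 0 < a) (hb : 0 < b) (θ : ℝ) :
    0 < a * cos θ ^ 2 + b * sin θ ^ 2 := by
  nlinarith [mul_le_mul_of_nonneg_right (min_le_left a b) (sq_nonneg (cos θ)),
    mul_le_mul_of_nonneg_right (min_le_right a b) (sq_nonneg (sin θ)), lt_min ha hb,
    sin_sq_add_cos_sq θ]

/-- Its tangent is `(√(z² - q x) / z) * tan (φ x)`; it equals `φ x` where
`sin (φ x) cos (φ x) = 0`. -/
noncomputable def localPruferAngle (q φ : ℝ → ℝ) (z x : ℝ) : ℝ :=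
  φ x + arctan ((√(z ^ 2 - q x) - z) * (sin (φ x) * cos (φ x)) /
    (z * cos (φ x) ^ 2 + √(z ^ 2 - q x) * sin (φ x) ^ 2))

lemma localPruferAngle_eq_of_sin_eq_zero {q φ : ℝ → ℝ} {z x : ℝ} (h : sin (φ x) = 0) :
    localPruferAngle q φ z x = φ x := by
  simp [localPruferAngle, h]

lemma localPruferAngle_one_sub_zero {q φ : ℝ → ℝ} {z : ℝ} {k : ℕ} (h0 : φ 0 = 0)
    (h1 : φ 1 = k * π) : localPruferAngle q φ z 1 - localPruferAngle q φ z 0 = k * π := by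
  rw [localPruferAngle_eq_of_sin_eq_zero (by rw [h1, sin_nat_mul_pi]),
    localPruferAngle_eq_of_sin_eq_zero (by rw [h0, sin_zero]), h0, h1, sub_zero]

lemma hasDerivAt_localPruferAngle {q q' φ : ℝ → ℝ} {z x : ℝ} (hz : 0 < z)
    (hq : HasDerivAt q (q' x) x) (hφ : HasDerivAt φ (z - q x / z * sin (φ x) ^ 2) x)
    (hqz : q x < z ^ 2) :
    HasDerivAt (localPruferAngle q φ z)
      (√(z ^ 2 - q x) - q' x * (sin (φ x) * cos (φ x)) * z /
        (2 * √(z ^ 2 - q x) * (z ^ 2 * cos (φ x) ^ 2 + √(z ^ 2 - q x) ^ 2 * sin (φ x) ^ 2))) x := by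
  have hP : 0 < √(z ^ 2 - q x) := sqrt_pos.2 (sub_pos.2 hqz)
  have hD := mul_cos_sq_add_mul_sin_sq_pos hz hP (φ x)
  have hΔ := mul_cos_sq_add_mul_sin_sq_pos (pow_pos hz 2) (pow_pos hP 2) (φ x)
  have hsqrt : HasDerivAt (fun y => √(z ^ 2 - q y)) (-q' x / (2 * √(z ^ 2 - q x))) x :=
    (hq.const_sub _).sqrt (sub_pos.2 hqz).ne'
  have hquot := ((hsqrt.sub_const z).mul (hφ.sin.mul hφ.cos)).div
    (((hφ.cos.pow 2).const_mul z).add (hsqrt.mul (hφ.sin.pow 2))) hD.ne'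
  refine (hφ.add hquot.arctan).congr_deriv ?_
  set S := sin (φ x) with hS
  set C := cos (φ x) with hC
  set P := √(z ^ 2 - q x) with hPdef
  have hSC : S ^ 2 + C ^ 2 = 1 := sin_sq_add_cos_sq (φ x)
  simp only [Pi.mul_apply, Pi.add_apply, Pi.div_apply, Pi.pow_apply, ← hS, ← hC, ← hPdef]
  rw [show q x = z ^ 2 - P ^ 2 by rw [hPdef, sq_sqrt (sub_pos.2 hqz).le]; ring]
  field_simp
  linear_combination 2 * P ^ 2 * z * S ^ 2 * (S ^ 2 + C ^ 2) *
    (P ^ 4 * S ^ 2 + P ^ 2 * z ^ 2 * (C ^ 2 - S ^ 2) - z ^ 4 * C ^ 2) * hSC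

lemma abs_mul_sin_mul_cos_div_le (a z P θ : ℝ) (hP : 0 < P) :
    |a * (sin θ * cos θ) * z / (2 * P * (z ^ 2 * cos θ ^ 2 + P ^ 2 * sin θ ^ 2))| ≤
      |a| / (4 * P ^ 2) := by
  rcases (add_nonneg (mul_nonneg (sq_nonneg z) (sq_nonneg (cos θ)))
    (mul_nonneg (sq_nonneg P) (sq_nonneg (sin θ)))).eq_or_lt with hΔ | hΔ
  · rw [← hΔ, mul_zero, div_zero, abs_zero]
    positivity
  have hden : 0 < 2 * P * (z ^ 2 * cos θ ^ 2 + P ^ 2 * sin θ ^ 2) := by positivity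
  rw [abs_div, abs_of_pos hden, div_le_div_iff₀ hden (by positivity), abs_mul, abs_mul, abs_mul]
  have hamgm := two_mul_le_add_sq (|z| * |cos θ|) (P * |sin θ|)
  simp only [mul_pow, sq_abs] at hamgm
  have := mul_le_mul_of_nonneg_left hamgm (mul_nonneg (abs_nonneg a) hP.le)
  nlinarith [abs_nonneg a]

def FollowsLocalFrequency (q : ℝ → ℝ) (z B : ℝ) (Θ : ℝ → ℝ) : Prop :=
  ∀ x ∈ Icc (0:ℝ) 1, ∃ d, HasDerivAt Θ d x ∧ |d - √(z ^ 2 - q x)| ≤ B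

lemma followsLocalFrequency_localPruferAngle {q q' φ : ℝ → ℝ} {z B : ℝ} (hz : 0 < z)
    (hq : ∀ x ∈ Icc (0:ℝ) 1, HasDerivAt q (q' x) x)
    (hφ : ∀ x ∈ Icc (0:ℝ) 1, HasDerivAt φ (z - q x / z * sin (φ x) ^ 2) x)
    (hqz : ∀ x ∈ Icc (0:ℝ) 1, q x < z ^ 2)
    (hq' : ∀ x ∈ Icc (0:ℝ) 1, |q' x| ≤ 4 * (z ^ 2 - q x) * B) :
    FollowsLocalFrequency q z B (localPruferAngle q φ z) := by
  intro x hx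
  refine ⟨_, hasDerivAt_localPruferAngle hz (hq x hx) (hφ x hx) (hqz x hx), ?_⟩
  have hqz' : 0 < z ^ 2 - q x := sub_pos.2 (hqz x hx)
  rw [sub_sub_cancel_left, abs_neg]
  refine (abs_mul_sin_mul_cos_div_le _ _ _ _ (sqrt_pos.2 hqz')).trans ?_
  rw [sq_sqrt hqz'.le, div_le_iff₀ (by positivity)]
  linarith [hq' x hx]

lemma sub_le_of_forall_hasDerivAt_le {F : ℝ → ℝ} {C : ℝ}
    (hF : ∀ x ∈ Icc (0:ℝ) 1, ∃ d, HasDerivAt F d x ∧ d ≤ C) : F 1 - F 0 ≤ C := by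
  choose! F' hF' hF'C using hF
  obtain ⟨x, hx, hslope⟩ := exists_hasDerivAt_eq_slope F F' zero_lt_one
    (fun x hx => (hF' x hx).continuousAt.continuousWithinAt)
    (fun x hx => hF' x (Ioo_subset_Icc_self hx))
  simpa [hslope] using hF'C x (Ioo_subset_Icc_self hx)

lemma sqrt_sub_sqrt_le_div {u Q w z : ℝ} (huQ : u ≤ Q) (hQw : Q < w ^ 2) (hwz : w ^ 2 ≤ z ^ 2) :
    √(z ^ 2 - u) - √(w ^ 2 - u) ≤ (z ^ 2 - w ^ 2) / (2 * √(w ^ 2 - Q)) := by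
  have hW : 0 < √(w ^ 2 - Q) := sqrt_pos.2 (by linarith)
  have hWY : √(w ^ 2 - Q) ≤ √(w ^ 2 - u) := sqrt_le_sqrt (by linarith)
  have hYX : √(w ^ 2 - u) ≤ √(z ^ 2 - u) := sqrt_le_sqrt (by linarith)
  have hprod : (√(z ^ 2 - u) - √(w ^ 2 - u)) * (√(z ^ 2 - u) + √(w ^ 2 - u)) = z ^ 2 - w ^ 2 := by
    linear_combination sq_sqrt (by linarith : 0 ≤ z ^ 2 - u) - sq_sqrt (by linarith : 0 ≤ w ^ 2 - u)
  rw [le_div_iff₀ (by positivity), ← hprod]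
  exact mul_le_mul_of_nonneg_left (by linarith) (sub_nonneg.2 hYX)

lemma div_le_mul_sqrt_sub_mul_sqrt {c u w z : ℝ} (hw : 0 < w) (hz : 0 < z) (hu : 0 ≤ u)
    (hcu : c ≤ u) (huw : u ≤ w ^ 2) (hwz : w ^ 2 ≤ z ^ 2) :
    c * (z ^ 2 - w ^ 2) / (2 * z * w) ≤ w * √(z ^ 2 - u) - z * √(w ^ 2 - u) := by
  have hX : √(z ^ 2 - u) ≤ z := sqrt_le_iff.2 ⟨hz.le, by linarith⟩
  have hY : √(w ^ 2 - u) ≤ w := sqrt_le_iff.2 ⟨hw.le, by linarith⟩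
  have hsq : (w * √(z ^ 2 - u)) ^ 2 - (z * √(w ^ 2 - u)) ^ 2 = u * (z ^ 2 - w ^ 2) := by
    linear_combination w ^ 2 * sq_sqrt (by linarith : 0 ≤ z ^ 2 - u) -
      z ^ 2 * sq_sqrt (by linarith : 0 ≤ w ^ 2 - u)
  have hT : 0 ≤ w * √(z ^ 2 - u) - z * √(w ^ 2 - u) := by
    refine sub_nonneg.2 ((pow_le_pow_iff_left₀ (by positivity) (by positivity) two_ne_zero).1 ?_)
    nlinarith
  rw [div_le_iff₀ (by positivity)]
  calc c * (z ^ 2 - w ^ 2) ≤ u * (z ^ 2 - w ^ 2) := mul_le_mul_of_nonneg_right hcu (by linarith)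
    _ = (w * √(z ^ 2 - u) - z * √(w ^ 2 - u)) * (w * √(z ^ 2 - u) + z * √(w ^ 2 - u)) := by
      rw [← hsq]; ring
    _ ≤ _ := mul_le_mul_of_nonneg_left (by nlinarith) hT

namespace FollowsLocalFrequency

variable {q : ℝ → ℝ} {B w z : ℝ} {Θ Ψ : ℝ → ℝ}

lemma sub_le (hq : ∀ x ∈ Icc (0:ℝ) 1, 0 ≤ q x) (hz : 0 ≤ z)
    (hΘ : FollowsLocalFrequency q z B Θ) : Θ 1 - Θ 0 ≤ z + B := by
  refine sub_le_of_forall_hasDerivAt_le fun x hx => ?_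
  obtain ⟨d, hd, hdB⟩ := hΘ x hx
  have : √(z ^ 2 - q x) ≤ z := sqrt_le_iff.2 ⟨hz, by linarith [hq x hx]⟩
  exact ⟨d, hd, by linarith [(abs_le.1 hdB).2]⟩

lemma sub_sub_le {Q : ℝ} (hqQ : ∀ x ∈ Icc (0:ℝ) 1, q x ≤ Q) (hQw : Q < w ^ 2)
    (hwz : w ^ 2 ≤ z ^ 2) (hΘ : FollowsLocalFrequency q w B Θ)
    (hΨ : FollowsLocalFrequency q z B Ψ) :
    (Ψ 1 - Ψ 0) - (Θ 1 - Θ 0) ≤ (z ^ 2 - w ^ 2) / (2 * √(w ^ 2 - Q)) + 2 * B := by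
  rw [sub_sub_sub_comm]
  refine sub_le_of_forall_hasDerivAt_le (F := fun y => Ψ y - Θ y) fun x hx => ?_
  obtain ⟨d, hd, hdB⟩ := hΘ x hx
  obtain ⟨e, he, heB⟩ := hΨ x hx
  have := sqrt_sub_sqrt_le_div (hqQ x hx) hQw hwz
  exact ⟨e - d, he.sub hd, by linarith [(abs_le.1 hdB).1, (abs_le.1 heB).2]⟩

lemma mul_sub_mul_le {c : ℝ} (hq : ∀ x ∈ Icc (0:ℝ) 1, 0 ≤ q x)
    (hcq : ∀ x ∈ Icc (0:ℝ) 1, c ≤ q x) (hqw : ∀ x ∈ Icc (0:ℝ) 1, q x ≤ w ^ 2)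
    (hw : 0 < w) (hz : 0 < z) (hwz : w ^ 2 ≤ z ^ 2) (hΘ : FollowsLocalFrequency q w B Θ)
    (hΨ : FollowsLocalFrequency q z B Ψ) :
    z * (Θ 1 - Θ 0) - w * (Ψ 1 - Ψ 0) ≤ (w + z) * B - c * (z ^ 2 - w ^ 2) / (2 * z * w) := by
  rw [mul_sub, mul_sub, sub_sub_sub_comm]
  refine sub_le_of_forall_hasDerivAt_le (F := fun y => z * Θ y - w * Ψ y) fun x hx => ?_
  obtain ⟨d, hd, hdB⟩ := hΘ x hx
  obtain ⟨e, he, heB⟩ := hΨ x hx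
  have := div_le_mul_sqrt_sub_mul_sqrt hw hz (hq x hx) (hcq x hx) (hqw x hx) hwz
  refine ⟨z * d - w * e, (hd.const_mul z).sub (he.const_mul w), ?_⟩
  nlinarith [abs_le.1 hdB, abs_le.1 heB]

end FollowsLocalFrequency

lemma sq_div_sq_le_of_angle_bounds {w z c Q B : ℝ} {m n : ℕ} (hw : 0 < w) (hwz : w < z)
    (hc : 0 ≤ c) (hcQ : c ≤ Q) (hQ : 11 * Q ≤ w ^ 2) (hm : 1 ≤ m) (hmn : m < n)
    (hB : B = c / (30 * (w ^ 2 - Q)))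
    (hlow : m * π ≤ w + B)
    (hgap : n * π - m * π ≤ (z ^ 2 - w ^ 2) / (2 * √(w ^ 2 - Q)) + 2 * B)
    (hcross : z * (m * π) - w * (n * π) ≤ (w + z) * B - c * (z ^ 2 - w ^ 2) / (2 * z * w)) :
    z ^ 2 / w ^ 2 ≤ n ^ 2 / m ^ 2 := by
  have hz : 0 < z := hw.trans hwz
  -- `B ≤ 1/300` forces `w ≥ 1` and `z² - w² ≥ 5 w`, which make the error `(w + z) B`
  -- smaller than the gain `c (z² - w²) / (2 z w)`.
  have hQw : 10 / 11 * w ^ 2 ≤ w ^ 2 - Q := by linarith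
  have hQw' : 0 < w ^ 2 - Q := by nlinarith
  have hB0 : 0 ≤ B := hB ▸ div_nonneg hc (by linarith)
  have hB300 : B ≤ 1 / 300 := by
    rw [hB, div_le_iff₀ (by linarith)]
    linarith
  have hm1 : (1 : ℝ) ≤ m := by exact_mod_cast hm
  have hnm : (m : ℝ) + 1 ≤ n := by exact_mod_cast hmn
  have hπ := pi_gt_d2
  have hw1 : 1 ≤ w := by nlinarith
  have hW : 9 / 10 * w ≤ √(w ^ 2 - Q) := le_sqrt_of_sq_le (by nlinarith)
  have hD : 5 * w ≤ z ^ 2 - w ^ 2 := by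
    have h : π - 2 * B ≤ (z ^ 2 - w ^ 2) / (2 * √(w ^ 2 - Q)) := by nlinarith
    rw [le_div_iff₀ (by linarith)] at h
    nlinarith
  have herr : (w + z) * B ≤ c * (z ^ 2 - w ^ 2) / (2 * z * w) := by
    rw [hB, mul_div_assoc', div_le_div_iff₀ (by linarith) (by positivity)]
    have h11 : 11 * z ^ 2 ≤ 75 * (z ^ 2 - w ^ 2) * w := by nlinarith
    have : (w + z) * (2 * z * w) ≤ 30 * (z ^ 2 - w ^ 2) * (w ^ 2 - Q) := by
      nlinarith [mul_le_mul_of_nonneg_left hwz.le (mul_nonneg hz.le hw.le)]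
    nlinarith
  have hmn' : m * z ≤ n * w := by nlinarith
  rw [div_le_div_iff₀ (by positivity) (by positivity)]
  nlinarith [mul_le_mul hmn' hmn' (by positivity) (by positivity)]

section SingleBarrier

variable {α β : Type*} [LinearOrder α] [LinearOrder β] {f : α → β} {a b x₀ x : α}

lemma apply_le_of_monotoneOn_of_antitoneOn (hmono : MonotoneOn f (Icc a x₀))
    (hanti : AntitoneOn f (Icc x₀ b)) (hx₀ : x₀ ∈ Icc a b) (hx : x ∈ Icc a b) :
    f x ≤ f x₀ := by
  rcases le_total x x₀ with h | h
  · exact hmono ⟨hx.1, h⟩ ⟨hx₀.1, le_rfl⟩ h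
  · exact hanti ⟨le_rfl, hx₀.2⟩ ⟨h, hx.2⟩ h

lemma min_le_apply_of_monotoneOn_of_antitoneOn (hmono : MonotoneOn f (Icc a x₀))
    (hanti : AntitoneOn f (Icc x₀ b)) (hx₀ : x₀ ∈ Icc a b) (hx : x ∈ Icc a b) :
    min (f a) (f b) ≤ f x := by
  rcases le_total x x₀ with h | h
  · exact (min_le_left _ _).trans (hmono ⟨le_rfl, hx₀.1⟩ ⟨hx.1, h⟩ hx.1)
  · exact (min_le_right _ _).trans (hanti ⟨h, hx.2⟩ ⟨hx₀.2, le_rfl⟩ hx.2)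

end SingleBarrier

theorem ratio_bound_single_barrier_general
    (q q' : ℝ → ℝ) (x₀ : ℝ) (hx₀ : x₀ ∈ Icc (0:ℝ) 1)
    (hqnonneg : ∀ x ∈ Icc (0:ℝ) 1, 0 ≤ q x)
    (hqdiff : ∀ x ∈ Icc (0:ℝ) 1, HasDerivAt q (q' x) x)
    (hmono : MonotoneOn q (Icc 0 x₀))
    (hanti : AntitoneOn q (Icc x₀ 1))
    (hq'bound : ∀ x ∈ Icc (0:ℝ) 1, |q' x| ≤ (2/15) * min (q 0) (q 1))
    (m n : ℕ) (hm : 1 ≤ m) (hmn : m < n)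
    (zm zn : ℝ) (hzm : 0 < zm)
    (φm φn : ℝ → ℝ)
    (hφm0 : φm 0 = 0)
    (hφmODE : ∀ x ∈ Icc (0:ℝ) 1,
      HasDerivAt φm (zm - q x / zm * Real.sin (φm x) ^ 2) x)
    (hφm1 : φm 1 = m * π)
    (hφn0 : φn 0 = 0)
    (hφnODE : ∀ x ∈ Icc (0:ℝ) 1,
      HasDerivAt φn (zn - q x / zn * Real.sin (φn x) ^ 2) x)
    (hφn1 : φn 1 = n * π)
    (hgt : zm < zn) (hlam : 11 * q x₀ ≤ zm ^ 2) :
    zn ^ 2 / zm ^ 2 ≤ (n : ℝ) ^ 2 / (m : ℝ) ^ 2 := by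
  set c := min (q 0) (q 1)
  set B := c / (30 * (zm ^ 2 - q x₀))
  have hzn : 0 < zn := hzm.trans hgt
  have hc : 0 ≤ c := le_min (hqnonneg 0 (left_mem_Icc.2 zero_le_one))
    (hqnonneg 1 (right_mem_Icc.2 zero_le_one))
  have hcq : ∀ x ∈ Icc (0:ℝ) 1, c ≤ q x :=
    fun x hx => min_le_apply_of_monotoneOn_of_antitoneOn hmono hanti hx₀ hx
  have hqQ : ∀ x ∈ Icc (0:ℝ) 1, q x ≤ q x₀ :=
    fun x hx => apply_le_of_monotoneOn_of_antitoneOn hmono hanti hx₀ hx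
  have hQ : q x₀ < zm ^ 2 := by linarith [hqnonneg x₀ hx₀, pow_pos hzm 2]
  have hzz : zm ^ 2 ≤ zn ^ 2 := pow_le_pow_left₀ hzm.le hgt.le 2
  have hsmall : ∀ z, zm ^ 2 ≤ z ^ 2 → ∀ x ∈ Icc (0:ℝ) 1, |q' x| ≤ 4 * (z ^ 2 - q x) * B := by
    intro z hz x hx
    have : 4 * (zm ^ 2 - q x₀) * B = 2 / 15 * c := by
      simp only [B]; field_simp [(sub_pos.2 hQ).ne']; ring
    nlinarith [hq'bound x hx, hqQ x hx, hc]
  have hΘm := followsLocalFrequency_localPruferAngle hzm hqdiff hφmODE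
    (fun x hx => (hqQ x hx).trans_lt hQ) (hsmall zm le_rfl)
  have hΘn := followsLocalFrequency_localPruferAngle hzn hqdiff hφnODE
    (fun x hx => (hqQ x hx).trans_lt (hQ.trans_le hzz)) (hsmall zn hzz)
  have hlow := hΘm.sub_le hqnonneg hzm.le
  have hgap := hΘm.sub_sub_le hqQ hQ hzz hΘn
  have hcross := hΘm.mul_sub_mul_le hqnonneg hcq (fun x hx => (hqQ x hx).trans hQ.le)
    hzm hzn hzz hΘn
  rw [localPruferAngle_one_sub_zero hφm0 hφm1] at hlow hgap hcross
  rw [localPruferAngle_one_sub_zero hφn0 hφn1] at hgap hcross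
  exact sq_div_sq_le_of_angle_bounds hzm hgt hc (hcq x₀ hx₀) hlam hm hmn rfl hlow hgap hcross

/-- Upper bound λₙ/λₘ ≤ n²/m² for Schrödinger operators with nonnegative
single-barrier potentials, when λₘ ≥ 11·q(x₀). -/
theorem ratio_bound_single_barrier
    (q q' : ℝ → ℝ) (x₀ : ℝ) (hx₀ : x₀ ∈ Icc (0:ℝ) 1)
    (hqnonneg : ∀ x ∈ Icc (0:ℝ) 1, 0 ≤ q x)
    (hqdiff : ∀ x ∈ Icc (0:ℝ) 1, HasDerivAt q (q' x) x)
    (hmono : MonotoneOn q (Icc 0 x₀))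
    (hanti : AntitoneOn q (Icc x₀ 1))
    (hq'bound : ∀ x ∈ Icc (0:ℝ) 1, |q' x| ≤ (2/15) * min (q 0) (q 1))
    (m n : ℕ) (hm : 1 ≤ m) (hmn : m < n)
    (zm zn : ℝ) (hzm : 0 < zm) (hzn : 0 < zn)
    (φm φn : ℝ → ℝ)
    (hφm0 : φm 0 = 0)
    (hφmODE : ∀ x ∈ Icc (0:ℝ) 1,
      HasDerivAt φm (zm - q x / zm * Real.sin (φm x) ^ 2) x)
    (hφm1 : φm 1 = m * π)
    (hφn0 : φn 0 = 0)
    (hφnODE : ∀ x ∈ Icc (0:ℝ) 1,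
      HasDerivAt φn (zn - q x / zn * Real.sin (φn x) ^ 2) x)
    (hφn1 : φn 1 = n * π)
    (hgt : zm < zn) (hlam : 11 * q x₀ ≤ zm ^ 2) :
    zn ^ 2 / zm ^ 2 ≤ (n : ℝ) ^ 2 / (m : ℝ) ^ 2 :=
  ratio_bound_single_barrier_general q q' x₀ hx₀ hqnonneg hqdiff hmono hanti hq'bound m n hm hmn zm
    zn hzm φm φn hφm0 hφmODE hφm1 hφn0 hφnODE hφn1 hgt hlam
end

section
/- Let q : [0,1] → ℝ be nonnegative, differentiable and single-barrier with transition point x₀ ∈ [0,1] (i.e. q is monotone increasing on [0,x₀] and monotone decreasing on [x₀,1]), and suppose |q'(x)| ≤ (2/15)·min{q(0), q(1)} for all x ∈ [0,1], and additionally q(x₀) ≤ π²/11. Let 1 ≤ m < n be integers and let z_m, z_n > 0 with z_n > z_m satisfy φ_q(1, z_m) = mπ and φ_q(1, z_n) = nπ. Then z_n²/z_m² ≤ n²/m². -/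
/-!
Integrating the Prüfer equation over `[0,1]` gives `z² = kπ z + S` with `S = ∫ q sin² φ`, hence
`kπ ≤ z ≤ kπ + π/11`. Writing `cos 2φ = (sin 2φ)' / (2φ')` and integrating `∫ q cos 2φ` by parts
gives `|S - Q/2| ≤ Q/(4z)` with `Q = ∫ q`: since `|q'| ≤ 2q/15` and `φ' ≈ z`, the derivative of
`q/φ'` is at most `q/z`. Because `z_n - z_m ≥ 1`, these bounds force `S_n z_m² ≤ S_m z_n²`, which by
the two identities is exactly `m z_n ≤ n z_m`.
-/

open Real Set MeasureTheory intervalIntegral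

section SingleBarrier

variable {α β : Type*} [LinearOrder α] [LinearOrder β] {f : α → β} {a b x₀ x : α}

theorem le_of_monotoneOn_of_antitoneOn (hx₀ : x₀ ∈ Icc a b) (hmono : MonotoneOn f (Icc a x₀))
    (hanti : AntitoneOn f (Icc x₀ b)) (hx : x ∈ Icc a b) : f x ≤ f x₀ := by
  rcases le_total x x₀ with h | h
  · exact hmono ⟨hx.1, h⟩ ⟨hx₀.1, le_rfl⟩ h
  · exact hanti ⟨le_rfl, hx₀.2⟩ ⟨h, hx.2⟩ h

theorem min_le_of_monotoneOn_of_antitoneOn (hx₀ : x₀ ∈ Icc a b) (hmono : MonotoneOn f (Icc a x₀))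
    (hanti : AntitoneOn f (Icc x₀ b)) (hx : x ∈ Icc a b) : min (f a) (f b) ≤ f x := by
  rcases le_total x x₀ with h | h
  · exact (min_le_left _ _).trans (hmono ⟨le_rfl, hx₀.1⟩ ⟨hx.1, h⟩ hx.1)
  · exact (min_le_right _ _).trans (hanti ⟨h, hx.2⟩ ⟨hx₀.2, le_rfl⟩ hx.2)

end SingleBarrier

theorem intervalIntegrable_of_hasDerivAt_of_abs_le {f f' g : ℝ → ℝ} {a b : ℝ}
    (hf : ∀ x ∈ uIcc a b, HasDerivAt f (f' x) x) (hg : IntervalIntegrable g volume a b)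
    (hf'g : ∀ x ∈ uIcc a b, |f' x| ≤ g x) : IntervalIntegrable f' volume a b := by
  have hderiv : f' =ᵐ[volume.restrict (uIoc a b)] deriv f := by
    refine (ae_restrict_iff' measurableSet_uIoc).2 (.of_forall fun x hx => ?_)
    exact ((hf x (uIoc_subset_uIcc hx)).deriv).symm
  refine hg.mono_fun' ((measurable_deriv f).aestronglyMeasurable.congr hderiv.symm) ?_
  refine (ae_restrict_iff' measurableSet_uIoc).2 (.of_forall fun x hx => ?_)
  exact hf'g x (uIoc_subset_uIcc hx)

theorem integral_mul_cos_two_mul_eq {f f' φ w : ℝ → ℝ} {a b : ℝ}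
    (hf : ∀ x ∈ uIcc a b, HasDerivAt f (f' x) x) (hf' : IntervalIntegrable f' volume a b)
    (hφ : ∀ x ∈ uIcc a b, HasDerivAt φ (w x) x) (hw : ContinuousOn w (uIcc a b))
    (ha : sin (2 * φ a) = 0) (hb : sin (2 * φ b) = 0) :
    ∫ x in a..b, f x * (cos (2 * φ x) * w x) = -∫ x in a..b, f' x * (sin (2 * φ x) / 2) := by
  have hv : ∀ x ∈ uIcc a b, HasDerivAt (fun y => sin (2 * φ y) / 2) (cos (2 * φ x) * w x) x :=
    fun x hx => (((hφ x hx).const_mul 2).sin.div_const 2).congr_deriv (by ring)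
  have hφc : ContinuousOn φ (uIcc a b) := HasDerivAt.continuousOn hφ
  have hv' : IntervalIntegrable (fun x => cos (2 * φ x) * w x) volume a b :=
    ((continuous_cos.comp_continuousOn (hφc.const_smul (2:ℝ))).mul hw).intervalIntegrable
  rw [integral_mul_deriv_eq_deriv_mul hf hv hf' hv', ha, hb]
  ring

theorem abs_integral_mul_cos_two_mul_le {f f' g φ w : ℝ → ℝ} {a b : ℝ} (hab : a ≤ b)
    (hf : ∀ x ∈ Icc a b, HasDerivAt f (f' x) x) (hg : IntervalIntegrable g volume a b)
    (hf'g : ∀ x ∈ Icc a b, |f' x| ≤ g x) (hφ : ∀ x ∈ Icc a b, HasDerivAt φ (w x) x)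
    (hw : ContinuousOn w (Icc a b)) (ha : sin (2 * φ a) = 0) (hb : sin (2 * φ b) = 0) :
    |∫ x in a..b, f x * (cos (2 * φ x) * w x)| ≤ (∫ x in a..b, g x) / 2 := by
  rw [← uIcc_of_le hab] at hf hf'g hφ hw
  have hf' := intervalIntegrable_of_hasDerivAt_of_abs_le hf hg hf'g
  have hsin : ContinuousOn (fun x => sin (2 * φ x) / 2) (uIcc a b) :=
    (continuous_sin.comp_continuousOn ((HasDerivAt.continuousOn hφ).const_smul (2:ℝ))).div_const 2
  rw [integral_mul_cos_two_mul_eq hf hf' hφ hw ha hb, abs_neg, ← intervalIntegral.integral_div]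
  refine (abs_integral_le_integral_abs hab).trans
    (integral_mono_on hab (hf'.mul_continuousOn hsin).abs (hg.div_const 2) fun x hx => ?_)
  have hx' : x ∈ uIcc a b := (uIcc_of_le hab).symm ▸ hx
  calc |f' x * (sin (2 * φ x) / 2)| = |f' x| * (|sin (2 * φ x)| / 2) := by
        rw [abs_mul, abs_div, abs_two]
    _ ≤ g x * (1 / 2) := by
        gcongr
        · exact (abs_nonneg _).trans (hf'g x hx')
        · exact hf'g x hx'
        · exact abs_sin_le_one _
    _ = g x / 2 := by ring

/-- The bound `|(q / φ')'| ≤ q / z` at a point, written with `p = q`, `p' = q'`, `c = sin² φ`,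
`s = sin 2φ` and `w = φ'`. -/
theorem abs_quotient_deriv_le {p p' c s w z : ℝ} (hp : 0 ≤ p) (hp1 : p ≤ 1)
    (hp' : |p'| ≤ 2 / 15 * p) (hc : c ∈ Icc (0:ℝ) 1) (hs : |s| ≤ 1) (hz : 3 ≤ z)
    (hw : w ∈ Icc (10 / 11 * z) z) :
    |(p' * w - p * (-(p' * c + p * s * w) / z)) / w ^ 2| ≤ p / z := by
  obtain ⟨hc0, hc1⟩ := hc
  obtain ⟨hwz, hwz'⟩ := hw
  have hz0 : 0 < z := by linarith
  have hw0 : 0 < w := by linarith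
  have hinner : |p' * c + p * s * w| ≤ 2 / 15 * p + p * z := by
    calc |p' * c + p * s * w| ≤ |p'| * c + p * |s| * w := by
          refine (abs_add_le _ _).trans ?_
          rw [abs_mul, abs_mul, abs_mul, abs_of_nonneg hc0, abs_of_nonneg hp, abs_of_pos hw0]
      _ ≤ 2 / 15 * p * 1 + p * 1 * z := by
          gcongr
      _ = _ := by ring
  have hnum : |p' * w - p * (-(p' * c + p * s * w) / z)| ≤ p * (2 / 15 * z + 2 / 45 + p) := by
    calc |p' * w - p * (-(p' * c + p * s * w) / z)|
        ≤ |p'| * w + p * |p' * c + p * s * w| / z := by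
          refine (abs_sub _ _).trans ?_
          rw [abs_mul, abs_mul, abs_div, abs_neg, abs_of_pos hw0, abs_of_nonneg hp,
            abs_of_pos hz0, mul_div_assoc]
      _ ≤ 2 / 15 * p * z + p * (2 / 15 * p + p * z) / z := by
          gcongr
      _ ≤ p * (2 / 15 * z + 2 / 45 + p) := by
          rw [mul_div_assoc, add_div, mul_div_cancel_right₀ _ hz0.ne']
          have : 2 / 15 * p / z ≤ 2 / 45 := by
            rw [div_le_iff₀ hz0]; nlinarith
          nlinarith
  rw [abs_div, abs_of_pos (by positivity : 0 < w ^ 2), div_le_div_iff₀ (by positivity) hz0]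
  have hw2 : 100 / 121 * z ^ 2 ≤ w ^ 2 := by nlinarith
  calc |p' * w - p * (-(p' * c + p * s * w) / z)| * z ≤ p * (2 / 15 * z + 2 / 45 + p) * z := by
        gcongr
    _ ≤ p * (100 / 121 * z ^ 2) := by nlinarith [mul_nonneg hp (by linarith : 0 ≤ z - 3)]
    _ ≤ p * w ^ 2 := by gcongr

noncomputable def pruferRhs (q : ℝ → ℝ) (z : ℝ) (φ : ℝ → ℝ) (x : ℝ) : ℝ :=
  z - q x / z * sin (φ x) ^ 2

def IsPruferAngle (q : ℝ → ℝ) (z : ℝ) (φ : ℝ → ℝ) : Prop :=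
  φ 0 = 0 ∧ ∀ x ∈ Icc (0:ℝ) 1, HasDerivAt φ (pruferRhs q z φ x) x

theorem pruferRhs_mem_Icc {q : ℝ → ℝ} {z : ℝ} {φ : ℝ → ℝ} {x : ℝ} (hq : 0 ≤ q x)
    (hqπ : q x ≤ π ^ 2 / 11) (hz : π ≤ z) : pruferRhs q z φ x ∈ Icc (10 / 11 * z) z := by
  have hz0 : 0 < z := pi_pos.trans_le hz
  have hqz : q x / z ≤ z / 11 := by
    rw [div_le_div_iff₀ hz0 (by norm_num)]
    nlinarith [mul_self_le_mul_self pi_pos.le hz]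
  have hs := sin_sq_le_one (φ x)
  have hs0 := sq_nonneg (sin (φ x))
  have hqz0 : 0 ≤ q x / z := div_nonneg hq hz0.le
  constructor <;> unfold pruferRhs <;> nlinarith

theorem hasDerivAt_pruferRhs {q q' φ : ℝ → ℝ} {z x : ℝ} (hq : HasDerivAt q (q' x) x)
    (hφ : HasDerivAt φ (pruferRhs q z φ x) x) :
    HasDerivAt (pruferRhs q z φ)
      (-(q' x * sin (φ x) ^ 2 + q x * sin (2 * φ x) * pruferRhs q z φ x) / z) x :=
  ((hasDerivAt_const x z).sub ((hq.div_const z).mul (hφ.sin.pow 2))).congr_deriv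
    (by simp only [Pi.pow_apply, sin_two_mul]; ring)

namespace IsPruferAngle

variable {q q' φ : ℝ → ℝ} {z : ℝ}

theorem continuousOn (hφ : IsPruferAngle q z φ) : ContinuousOn φ (Icc 0 1) :=
  HasDerivAt.continuousOn hφ.2

theorem sq_eq (hφ : IsPruferAngle q z φ) (hq : ContinuousOn q (Icc 0 1)) (hz : z ≠ 0) :
    z ^ 2 = φ 1 * z + ∫ x in (0:ℝ)..1, q x * sin (φ x) ^ 2 := by
  have hqs : ContinuousOn (fun x => q x * sin (φ x) ^ 2) (Icc 0 1) :=
    hq.mul ((continuous_sin.comp_continuousOn hφ.continuousOn).pow 2)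
  have hrhs : ContinuousOn (pruferRhs q z φ) (uIcc 0 1) := by
    rw [uIcc_of_le zero_le_one]
    exact continuousOn_const.sub ((hq.div_const z).mul
      ((continuous_sin.comp_continuousOn hφ.continuousOn).pow 2))
  have hftc := integral_eq_sub_of_hasDerivAt
    (fun x hx => hφ.2 x (by rwa [uIcc_of_le zero_le_one] at hx)) hrhs.intervalIntegrable
  have hint : ∫ x in (0:ℝ)..1, pruferRhs q z φ x
      = z - (∫ x in (0:ℝ)..1, q x * sin (φ x) ^ 2) / z := by
    simp only [pruferRhs, div_mul_eq_mul_div]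
    rw [integral_sub intervalIntegrable_const
      ((hqs.intervalIntegrable_of_Icc zero_le_one).div_const z), intervalIntegral.integral_div]
    simp
  rw [hint, hφ.1, sub_zero] at hftc
  rw [← hftc]
  field_simp
  ring

theorem mem_Icc_of_eq_mul_pi {k : ℕ} (hφ : IsPruferAngle q z φ) (hφ1 : φ 1 = k * π) (hk : 1 ≤ k)
    (hq : ContinuousOn q (Icc 0 1)) (hq0 : ∀ x ∈ Icc (0:ℝ) 1, 0 ≤ q x)
    (hqπ : ∀ x ∈ Icc (0:ℝ) 1, q x ≤ π ^ 2 / 11) (hz : 0 < z) :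
    z ∈ Icc (k * π) (k * π + π / 11) := by
  set S := ∫ x in (0:ℝ)..1, q x * sin (φ x) ^ 2
  have hsq : z ^ 2 = k * π * z + S := hφ1 ▸ hφ.sq_eq hq hz.ne'
  have hS0 : 0 ≤ S := integral_nonneg zero_le_one fun x hx => mul_nonneg (hq0 x hx) (sq_nonneg _)
  have hSπ : S ≤ π ^ 2 / 11 := by
    have hqs : ContinuousOn (fun x => q x * sin (φ x) ^ 2) (Icc 0 1) :=
      hq.mul ((continuous_sin.comp_continuousOn hφ.continuousOn).pow 2)
    calc S ≤ ∫ _ in (0:ℝ)..1, π ^ 2 / 11 :=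
          integral_mono_on zero_le_one (hqs.intervalIntegrable_of_Icc zero_le_one)
            intervalIntegrable_const fun x hx =>
              (mul_le_of_le_one_right (hq0 x hx) (sin_sq_le_one _)).trans (hqπ x hx)
      _ = π ^ 2 / 11 := by simp
  have hk1 : (1 : ℝ) ≤ k := by exact_mod_cast hk
  have hlo : k * π ≤ z := by nlinarith
  have hπz : π ≤ z := le_trans (by nlinarith [pi_pos]) hlo
  exact ⟨hlo, by nlinarith [pi_pos]⟩

theorem abs_integral_mul_cos_two_mul_le (hφ : IsPruferAngle q z φ) (hφ1 : sin (φ 1) = 0)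
    (hq : ∀ x ∈ Icc (0:ℝ) 1, HasDerivAt q (q' x) x) (hq0 : ∀ x ∈ Icc (0:ℝ) 1, 0 ≤ q x)
    (hqπ : ∀ x ∈ Icc (0:ℝ) 1, q x ≤ π ^ 2 / 11) (hq' : ∀ x ∈ Icc (0:ℝ) 1, |q' x| ≤ 2 / 15 * q x)
    (hz : π ≤ z) :
    |∫ x in (0:ℝ)..1, q x * cos (2 * φ x)| ≤ (∫ x in (0:ℝ)..1, q x) / (2 * z) := by
  set w := pruferRhs q z φ
  have hw : ∀ x ∈ Icc (0:ℝ) 1, w x ∈ Icc (10 / 11 * z) z :=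
    fun x hx => pruferRhs_mem_Icc (hq0 x hx) (hqπ x hx) hz
  have hw0 : ∀ x ∈ Icc (0:ℝ) 1, w x ≠ 0 := fun x hx => by
    linarith [(hw x hx).1, pi_pos]
  have hqc : ContinuousOn q (Icc 0 1) := HasDerivAt.continuousOn hq
  have hwc : ContinuousOn w (Icc 0 1) :=
    HasDerivAt.continuousOn fun x hx => hasDerivAt_pruferRhs (hq x hx) (hφ.2 x hx)
  set u' := fun x => (q' x * w x - q x *
    (-(q' x * sin (φ x) ^ 2 + q x * sin (2 * φ x) * w x) / z)) / w x ^ 2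
  have hu : ∀ x ∈ Icc (0:ℝ) 1, HasDerivAt (fun x => q x / w x) (u' x) x := fun x hx =>
    (hq x hx).div (hasDerivAt_pruferRhs (hq x hx) (hφ.2 x hx)) (hw0 x hx)
  have hu'le : ∀ x ∈ Icc (0:ℝ) 1, |u' x| ≤ q x / z := fun x hx =>
    abs_quotient_deriv_le (hq0 x hx) ((hqπ x hx).trans (by nlinarith [pi_lt_d2, pi_pos]))
      (hq' x hx) ⟨sq_nonneg _, sin_sq_le_one _⟩ (abs_sin_le_one _)
      (pi_gt_three.le.trans hz) (hw x hx)
  have hcongr : ∫ x in (0:ℝ)..1, q x * cos (2 * φ x)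
      = ∫ x in (0:ℝ)..1, q x / w x * (cos (2 * φ x) * w x) :=
    integral_congr fun x hx => by
      field_simp [hw0 x (by rwa [uIcc_of_le zero_le_one] at hx)]
  rw [hcongr, div_mul_eq_div_div_swap, ← intervalIntegral.integral_div]
  exact _root_.abs_integral_mul_cos_two_mul_le zero_le_one hu
    ((hqc.div_const z).intervalIntegrable_of_Icc zero_le_one) hu'le hφ.2 hwc
    (by simp [hφ.1]) (by simp [sin_two_mul, hφ1])

theorem abs_integral_sub_half_le (hφ : IsPruferAngle q z φ) (hφ1 : sin (φ 1) = 0)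
    (hq : ∀ x ∈ Icc (0:ℝ) 1, HasDerivAt q (q' x) x) (hq0 : ∀ x ∈ Icc (0:ℝ) 1, 0 ≤ q x)
    (hqπ : ∀ x ∈ Icc (0:ℝ) 1, q x ≤ π ^ 2 / 11) (hq' : ∀ x ∈ Icc (0:ℝ) 1, |q' x| ≤ 2 / 15 * q x)
    (hz : π ≤ z) :
    |(∫ x in (0:ℝ)..1, q x * sin (φ x) ^ 2) - (∫ x in (0:ℝ)..1, q x) / 2|
      ≤ (∫ x in (0:ℝ)..1, q x) / (4 * z) := by
  have hqc : ContinuousOn q (Icc 0 1) := HasDerivAt.continuousOn hq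
  have hqs : ContinuousOn (fun x => q x * sin (φ x) ^ 2) (Icc 0 1) :=
    hqc.mul ((continuous_sin.comp_continuousOn hφ.continuousOn).pow 2)
  have hcos : ∫ x in (0:ℝ)..1, q x * cos (2 * φ x)
      = (∫ x in (0:ℝ)..1, q x) - 2 * ∫ x in (0:ℝ)..1, q x * sin (φ x) ^ 2 := by
    simp only [cos_two_mul_eq_one_sub, mul_sub, mul_one, mul_left_comm _ (2:ℝ)]
    rw [integral_sub (hqc.intervalIntegrable_of_Icc zero_le_one)
      ((hqs.intervalIntegrable_of_Icc zero_le_one).const_mul 2), intervalIntegral.integral_const_mul]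
  have h := hφ.abs_integral_mul_cos_two_mul_le hφ1 hq hq0 hqπ hq' hz
  rw [hcos] at h
  rw [show ∀ Q S : ℝ, S - Q / 2 = -((Q - 2 * S) / 2) by intros; ring, abs_neg, abs_div, abs_two,
    div_le_iff₀ two_pos]
  exact h.trans_eq (by ring)

end IsPruferAngle

theorem mul_sq_le_mul_sq_of_abs_sub_half_le {Q S T a b : ℝ} (hQ : 0 ≤ Q) (ha : 1 ≤ a)
    (hab : a + 1 ≤ b) (hS : |S - Q / 2| ≤ Q / (4 * a)) (hT : |T - Q / 2| ≤ Q / (4 * b)) :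
    T * a ^ 2 ≤ S * b ^ 2 := by
  have ha0 : 0 < a := by linarith
  have hb0 : 0 < b := by linarith
  have hgap : (b - a) ^ 2 ≤ a * b * (2 * (b - a) - 1) := by
    nlinarith [mul_nonneg (by linarith : (0:ℝ) ≤ a - 1) (by linarith : (0:ℝ) ≤ b - a - 1)]
  calc T * a ^ 2 ≤ (Q / 2 + Q / (4 * b)) * a ^ 2 := by
        gcongr
        linarith [(abs_le.1 hT).2]
    _ ≤ (Q / 2 - Q / (4 * a)) * b ^ 2 := by
        rw [← sub_nonneg]
        have e : (Q / 2 - Q / (4 * a)) * b ^ 2 - (Q / 2 + Q / (4 * b)) * a ^ 2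
            = Q * (a + b) * (a * b * (2 * (b - a) - 1) - (b - a) ^ 2) / (4 * a * b) := by
          field_simp
          ring
        rw [e]
        have : 0 ≤ a * b * (2 * (b - a) - 1) - (b - a) ^ 2 := by linarith
        positivity
    _ ≤ S * b ^ 2 := by
        gcongr
        linarith [(abs_le.1 hS).1]

theorem mul_le_mul_of_sq_eq_of_mul_sq_le {S T a b k l : ℝ} (ha : 0 < a) (hb : 0 < b)
    (hSa : a ^ 2 = k * π * a + S) (hTb : b ^ 2 = l * π * b + T) (h : T * a ^ 2 ≤ S * b ^ 2) :
    k * b ≤ l * a := by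
  have e : S * b ^ 2 - T * a ^ 2 = π * a * b * (l * a - k * b) := by
    rw [eq_sub_of_add_eq' hSa.symm, eq_sub_of_add_eq' hTb.symm]
    ring
  have : 0 ≤ π * a * b * (l * a - k * b) := e ▸ sub_nonneg.2 h
  linarith [(mul_nonneg_iff_of_pos_left (by positivity : 0 < π * a * b)).1 this]

theorem ratio_bound_single_barrier_all_general
    (q q' : ℝ → ℝ) (x₀ : ℝ) (hx₀ : x₀ ∈ Icc (0:ℝ) 1)
    (hqnonneg : ∀ x ∈ Icc (0:ℝ) 1, 0 ≤ q x)
    (hqdiff : ∀ x ∈ Icc (0:ℝ) 1, HasDerivAt q (q' x) x)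
    (hmono : MonotoneOn q (Icc 0 x₀))
    (hanti : AntitoneOn q (Icc x₀ 1))
    (hq'bound : ∀ x ∈ Icc (0:ℝ) 1, |q' x| ≤ (2/15) * min (q 0) (q 1))
    (hsmall : q x₀ ≤ π ^ 2 / 11)
    (m n : ℕ) (hm : 1 ≤ m) (hmn : m < n)
    (zm zn : ℝ) (hzm : 0 < zm) (hzn : 0 < zn)
    (φm φn : ℝ → ℝ)
    (hφm0 : φm 0 = 0)
    (hφmODE : ∀ x ∈ Icc (0:ℝ) 1,
      HasDerivAt φm (zm - q x / zm * Real.sin (φm x) ^ 2) x)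
    (hφm1 : φm 1 = m * π)
    (hφn0 : φn 0 = 0)
    (hφnODE : ∀ x ∈ Icc (0:ℝ) 1,
      HasDerivAt φn (zn - q x / zn * Real.sin (φn x) ^ 2) x)
    (hφn1 : φn 1 = n * π) :
    zn ^ 2 / zm ^ 2 ≤ (n : ℝ) ^ 2 / (m : ℝ) ^ 2 := by
  have hqc : ContinuousOn q (Icc 0 1) := HasDerivAt.continuousOn hqdiff
  have hqπ : ∀ x ∈ Icc (0:ℝ) 1, q x ≤ π ^ 2 / 11 := fun x hx =>
    (le_of_monotoneOn_of_antitoneOn hx₀ hmono hanti hx).trans hsmall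
  have hq' : ∀ x ∈ Icc (0:ℝ) 1, |q' x| ≤ 2 / 15 * q x := fun x hx =>
    (hq'bound x hx).trans (by gcongr; exact min_le_of_monotoneOn_of_antitoneOn hx₀ hmono hanti hx)
  have hPm : IsPruferAngle q zm φm := ⟨hφm0, hφmODE⟩
  have hPn : IsPruferAngle q zn φn := ⟨hφn0, hφnODE⟩
  obtain ⟨hzm_lo, hzm_hi⟩ := hPm.mem_Icc_of_eq_mul_pi hφm1 hm hqc hqnonneg hqπ hzm
  obtain ⟨hzn_lo, -⟩ := hPn.mem_Icc_of_eq_mul_pi hφn1 (hm.trans hmn.le) hqc hqnonneg hqπ hzn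
  have hm1 : (1 : ℝ) ≤ m := by exact_mod_cast hm
  have hmn1 : (m : ℝ) + 1 ≤ n := by exact_mod_cast hmn
  have hπ_zm : π ≤ zm := le_trans (by nlinarith [pi_pos]) hzm_lo
  have hπ_zn : π ≤ zn := le_trans (by nlinarith [pi_pos]) hzn_lo
  have hgap : zm + 1 ≤ zn := by nlinarith [pi_gt_three]
  have hS := mul_sq_le_mul_sq_of_abs_sub_half_le (integral_nonneg zero_le_one hqnonneg)
    (by linarith [pi_gt_three]) hgap
    (hPm.abs_integral_sub_half_le (by simp [hφm1, sin_nat_mul_pi]) hqdiff hqnonneg hqπ hq' hπ_zm)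
    (hPn.abs_integral_sub_half_le (by simp [hφn1, sin_nat_mul_pi]) hqdiff hqnonneg hqπ hq' hπ_zn)
  have hratio : (m : ℝ) * zn ≤ n * zm := mul_le_mul_of_sq_eq_of_mul_sq_le hzm hzn
    (hφm1 ▸ hPm.sq_eq hqc hzm.ne') (hφn1 ▸ hPn.sq_eq hqc hzn.ne') hS
  rw [div_le_div_iff₀ (by positivity) (by positivity), ← mul_pow, ← mul_pow, mul_comm _ (m : ℝ)]
  exact pow_le_pow_left₀ (by positivity) hratio 2

/-- Upper bound λₙ/λₘ ≤ n²/m² for all 1 ≤ m < n, for nonnegative single-barrier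
potentials with q(x₀) ≤ π²/11. -/
theorem ratio_bound_single_barrier_all
    (q q' : ℝ → ℝ) (x₀ : ℝ) (hx₀ : x₀ ∈ Icc (0:ℝ) 1)
    (hqnonneg : ∀ x ∈ Icc (0:ℝ) 1, 0 ≤ q x)
    (hqdiff : ∀ x ∈ Icc (0:ℝ) 1, HasDerivAt q (q' x) x)
    (hmono : MonotoneOn q (Icc 0 x₀))
    (hanti : AntitoneOn q (Icc x₀ 1))
    (hq'bound : ∀ x ∈ Icc (0:ℝ) 1, |q' x| ≤ (2/15) * min (q 0) (q 1))
    (hsmall : q x₀ ≤ π ^ 2 / 11)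
    (m n : ℕ) (hm : 1 ≤ m) (hmn : m < n)
    (zm zn : ℝ) (hzm : 0 < zm) (hzn : 0 < zn)
    (φm φn : ℝ → ℝ)
    (hφm0 : φm 0 = 0)
    (hφmODE : ∀ x ∈ Icc (0:ℝ) 1,
      HasDerivAt φm (zm - q x / zm * Real.sin (φm x) ^ 2) x)
    (hφm1 : φm 1 = m * π)
    (hφn0 : φn 0 = 0)
    (hφnODE : ∀ x ∈ Icc (0:ℝ) 1,
      HasDerivAt φn (zn - q x / zn * Real.sin (φn x) ^ 2) x)
    (hφn1 : φn 1 = n * π)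
    (hgt : zm < zn) :
    zn ^ 2 / zm ^ 2 ≤ (n : ℝ) ^ 2 / (m : ℝ) ^ 2 :=
  ratio_bound_single_barrier_all_general q q' x₀ hx₀ hqnonneg hqdiff hmono hanti hq'bound hsmall m n
    hm hmn zm zn hzm hzn φm φn hφm0 hφmODE hφm1 hφn0 hφnODE hφn1
end

section
/- Let x₀ > 0, let q : [0,x₀] → ℝ be continuous and nonnegative, let z > 0, and let φ be the Prüfer angle of q at z with Prüfer radius r(x) = exp(∫₀ˣ (q(t)/z)·sin(φ(t))·cos(φ(t)) dt). Let i ≥ 0 be an integer, D ∈ [0,π], and let a ≤ b be points of (0,x₀] with φ(a) = iπ + π/2 and φ(b) = iπ + π/2 + D. Then ∫ₐᵇ r(x)²·(q(x)/z)·(sin²φ(x) − φ(x)·sinφ(x)·cosφ(x)) dx ≥ r(b)²·[ ∫ₐᵇ (q(x)/z)·(sin²φ(x) − φ(x)·sinφ(x)·cosφ(x)) dx − 2·∫ₐᵇ (q(x)/z)·sinφ(x)·cosφ(x)·( ∫ₐˣ (q(s)/z)·sin²φ(s) ds ) dx ]. -/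
/-!
Write `p = (q/z) sin² φ`, `g = (q/z) sin φ cos φ`, `P(x) = ∫ₐˣ p` and `G(x) = ∫_b^x g`, so that
`φ' = z - p` and `r(x)² = r(b)² e^{2G(x)}`. Put `K = (e^{2G} - 1)/2 - G`: it is nonnegative by
convexity of `exp`, vanishes at `b`, and `K' = (e^{2G} - 1) g`. Divided by `r(b)²`, the difference
of the two sides is the integral of `(z + p) K - (φ K - 2 P G)'`, that is
`φ(a) K(a) + ∫ₐᵇ (z + p) K ≥ 0`.
-/

open Real Set MeasureTheory

theorem ContinuousOn.exists_continuous_eqOn_Icc {a b : ℝ} {f : ℝ → ℝ} (hab : a ≤ b)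
    (hf : ContinuousOn f (Icc a b)) : ∃ F : ℝ → ℝ, Continuous F ∧ EqOn F f (Icc a b) :=
  ⟨IccExtend hab ((Icc a b).domRestrict f), continuous_IccExtend_iff.2 hf.domRestrict,
    fun _ hx => IccExtend_of_mem hab _ hx⟩

theorem exp_integral_sq_eq_mul {g : ℝ → ℝ} {c b x : ℝ} (hb : IntervalIntegrable g volume c b)
    (hx : IntervalIntegrable g volume c x) :
    exp (∫ t in c..x, g t) ^ 2 = exp (∫ t in c..b, g t) ^ 2 * exp (2 * ∫ t in b..x, g t) := by
  rw [← intervalIntegral.integral_add_adjacent_intervals hb (hb.symm.trans hx)]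
  simp only [← exp_nat_mul, ← exp_add]
  ring_nf

section

variable {a b z : ℝ} {φ p g : ℝ → ℝ}

theorem integral_sub_two_mul_integral_le_integral_exp_mul_of_continuous (hab : a ≤ b)
    (hz : 0 ≤ z) (hp : Continuous p) (hg : Continuous g) (hp0 : ∀ x ∈ Icc a b, 0 ≤ p x)
    (hφ : ∀ x ∈ Icc a b, HasDerivAt φ (z - p x) x) (hφa : 0 ≤ φ a) :
    (∫ x in a..b, (p x - φ x * g x)) - 2 * ∫ x in a..b, g x * ∫ s in a..x, p s ≤
      ∫ x in a..b, exp (2 * ∫ t in b..x, g t) * (p x - φ x * g x) := by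
  set P : ℝ → ℝ := fun x => ∫ s in a..x, p s
  set G : ℝ → ℝ := fun x => ∫ t in b..x, g t
  set K : ℝ → ℝ := fun x => (exp (2 * G x) - 1) / 2 - G x
  have hP : ∀ x, HasDerivAt P (p x) x := fun x => (hp.integral_hasStrictDerivAt a x).hasDerivAt
  have hG : ∀ x, HasDerivAt G (g x) x := fun x => (hg.integral_hasStrictDerivAt b x).hasDerivAt
  have hK : ∀ x, HasDerivAt K ((exp (2 * G x) - 1) * g x) x := fun x =>
    ((((hG x).const_mul 2).exp.sub_const 1).div_const 2 |>.sub (hG x)).congr_deriv (by ring)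
  have hK0 : ∀ x, 0 ≤ K x := fun x => by
    show 0 ≤ (exp (2 * G x) - 1) / 2 - G x
    linarith [add_one_le_exp (2 * G x)]
  have hφc : ContinuousOn φ (uIcc a b) := fun x hx =>
    (hφ x (uIcc_of_le hab ▸ hx)).continuousAt.continuousWithinAt
  have hint : ∀ f : ℝ → ℝ, ContinuousOn f (uIcc a b) → IntervalIntegrable f volume a b :=
    fun f hf => hf.intervalIntegrable
  set F' : ℝ → ℝ := fun x => (z - p x) * K x + φ x * ((exp (2 * G x) - 1) * g x)
      - 2 * (p x * G x + P x * g x)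
  have hF : ∀ x ∈ uIcc a b, HasDerivAt (fun x => φ x * K x - 2 * (P x * G x)) (F' x) x :=
    fun x hx => ((hφ x (uIcc_of_le hab ▸ hx)).mul (hK x)).sub (((hP x).mul (hG x)).const_mul 2)
  have hF_integral : ∫ x in a..b, -F' x = φ a * K a := by
    rw [intervalIntegral.integral_neg,
      intervalIntegral.integral_eq_sub_of_hasDerivAt hF (hint _ (by fun_prop))]
    simp [K, G, P]
  have hF_le : ∀ x ∈ Icc a b, -F' x ≤ exp (2 * G x) * (p x - φ x * g x) - (p x - φ x * g x)
      + 2 * (g x * P x) := fun x hx => by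
    -- the right side minus the left side is `(z + p x) * K x`
    have hzpK : 0 ≤ (z + p x) * K x := mul_nonneg (by linarith [hp0 x hx]) (hK0 x)
    simp only [F', K] at hzpK ⊢
    linarith
  have hmono : ∫ x in a..b, -F' x ≤ ∫ x in a..b, (exp (2 * G x) * (p x - φ x * g x)
      - (p x - φ x * g x) + 2 * (g x * P x)) :=
    intervalIntegral.integral_mono_on hab (hint _ (by fun_prop)) (hint _ (by fun_prop)) hF_le
  rw [intervalIntegral.integral_add (hint _ (by fun_prop)) (hint _ (by fun_prop)),
    intervalIntegral.integral_sub (hint _ (by fun_prop)) (hint _ (by fun_prop)),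
    intervalIntegral.integral_const_mul, hF_integral] at hmono
  linarith [mul_nonneg hφa (hK0 a)]

theorem integral_sub_two_mul_integral_le_integral_exp_mul (hab : a ≤ b) (hz : 0 ≤ z)
    (hp : ContinuousOn p (Icc a b)) (hg : ContinuousOn g (Icc a b))
    (hp0 : ∀ x ∈ Icc a b, 0 ≤ p x) (hφ : ∀ x ∈ Icc a b, HasDerivAt φ (z - p x) x)
    (hφa : 0 ≤ φ a) :
    (∫ x in a..b, (p x - φ x * g x)) - 2 * ∫ x in a..b, g x * ∫ s in a..x, p s ≤
      ∫ x in a..b, exp (2 * ∫ t in b..x, g t) * (p x - φ x * g x) := by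
  obtain ⟨p', hp'c, hp'p⟩ := hp.exists_continuous_eqOn_Icc hab
  obtain ⟨g', hg'c, hg'g⟩ := hg.exists_continuous_eqOn_Icc hab
  have key := integral_sub_two_mul_integral_le_integral_exp_mul_of_continuous hab hz hp'c hg'c
    (fun x hx => hp'p hx ▸ hp0 x hx) (fun x hx => hp'p hx ▸ hφ x hx) hφa
  rw [← uIcc_of_le hab] at hp'p hg'g
  have hP : ∀ x ∈ uIcc a b, ∫ s in a..x, p s = ∫ s in a..x, p' s := fun x hx =>
    intervalIntegral.integral_congr fun s hs =>
      (hp'p (uIcc_subset_uIcc left_mem_uIcc hx hs)).symm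
  have hG : ∀ x ∈ uIcc a b, ∫ t in b..x, g t = ∫ t in b..x, g' t := fun x hx =>
    intervalIntegral.integral_congr fun t ht =>
      (hg'g (uIcc_subset_uIcc right_mem_uIcc hx ht)).symm
  have h₁ : ∫ x in a..b, (p x - φ x * g x) = ∫ x in a..b, (p' x - φ x * g' x) :=
    intervalIntegral.integral_congr fun x hx => by simp only [hp'p hx, hg'g hx]
  have h₂ : ∫ x in a..b, g x * ∫ s in a..x, p s = ∫ x in a..b, g' x * ∫ s in a..x, p' s :=
    intervalIntegral.integral_congr fun x hx => by simp only [hg'g hx, hP x hx]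
  have h₃ : ∫ x in a..b, exp (2 * ∫ t in b..x, g t) * (p x - φ x * g x) =
      ∫ x in a..b, exp (2 * ∫ t in b..x, g' t) * (p' x - φ x * g' x) :=
    intervalIntegral.integral_congr fun x hx => by simp only [hp'p hx, hg'g hx, hG x hx]
  rwa [h₁, h₂, h₃]

end

theorem weighted_integral_lower_bound_general
    (x₀ : ℝ)
    (q : ℝ → ℝ) (hqc : ContinuousOn q (Icc 0 x₀))
    (hqnonneg : ∀ x ∈ Icc 0 x₀, 0 ≤ q x)
    (z : ℝ) (hz : 0 < z)
    (φ : ℝ → ℝ)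
    (hφODE : ∀ x ∈ Icc 0 x₀, HasDerivAt φ (z - q x / z * Real.sin (φ x) ^ 2) x)
    (r : ℝ → ℝ)
    (hr : ∀ x, r x = Real.exp (∫ t in (0:ℝ)..x, q t / z * Real.sin (φ t) * Real.cos (φ t)))
    (i : ℕ)
    (a b : ℝ) (ha : a ∈ Ioc 0 x₀) (hb : b ∈ Ioc 0 x₀) (hab : a ≤ b)
    (hφa : φ a = i * π + π / 2) :
    (∫ x in a..b, r x ^ 2 * (q x / z) *
        (Real.sin (φ x) ^ 2 - φ x * Real.sin (φ x) * Real.cos (φ x))) ≥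
      r b ^ 2 *
        ((∫ x in a..b, (q x / z) *
            (Real.sin (φ x) ^ 2 - φ x * Real.sin (φ x) * Real.cos (φ x)))
          - 2 * ∫ x in a..b, (q x / z) * Real.sin (φ x) * Real.cos (φ x) *
              (∫ s in a..x, (q s / z) * Real.sin (φ s) ^ 2)) := by
  have hφc : ContinuousOn φ (Icc 0 x₀) := fun x hx =>
    (hφODE x hx).continuousAt.continuousWithinAt
  have hgc : ContinuousOn (fun x => q x / z * Real.sin (φ x) * Real.cos (φ x)) (Icc 0 x₀) := by
    fun_prop
  have hpc : ContinuousOn (fun x => q x / z * Real.sin (φ x) ^ 2) (Icc 0 x₀) := by fun_prop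
  set p : ℝ → ℝ := fun x => q x / z * Real.sin (φ x) ^ 2
  set g : ℝ → ℝ := fun x => q x / z * Real.sin (φ x) * Real.cos (φ x)
  have h0b : Icc 0 b ⊆ Icc 0 x₀ := Icc_subset_Icc_right hb.2
  have hab₀ : Icc a b ⊆ Icc 0 x₀ := Icc_subset_Icc ha.1.le hb.2
  have hr_sq : ∀ x ∈ Icc a b, r x ^ 2 = r b ^ 2 * exp (2 * ∫ t in b..x, g t) := fun x hx => by
    rw [hr, hr]
    exact exp_integral_sq_eq_mul ((hgc.mono h0b).intervalIntegrable_of_Icc hb.1.le)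
      ((hgc.mono ((Icc_subset_Icc_right hx.2).trans h0b)).intervalIntegrable_of_Icc
        (ha.1.le.trans hx.1))
  have key := integral_sub_two_mul_integral_le_integral_exp_mul hab hz.le
    (hpc.mono hab₀) (hgc.mono hab₀)
    (fun x hx => mul_nonneg (div_nonneg (hqnonneg x (hab₀ hx)) hz.le) (sq_nonneg _))
    (fun x hx => hφODE x (hab₀ hx)) (by rw [hφa]; positivity)
  have hweighted : ∫ x in a..b, r x ^ 2 * (q x / z) *
        (Real.sin (φ x) ^ 2 - φ x * Real.sin (φ x) * Real.cos (φ x)) =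
      r b ^ 2 * ∫ x in a..b, exp (2 * ∫ t in b..x, g t) * (p x - φ x * g x) := by
    rw [← intervalIntegral.integral_const_mul]
    refine intervalIntegral.integral_congr fun x hx => ?_
    rw [hr_sq x (uIcc_of_le hab ▸ hx)]
    ring
  have hunweighted : ∫ x in a..b, (q x / z) *
        (Real.sin (φ x) ^ 2 - φ x * Real.sin (φ x) * Real.cos (φ x)) =
      ∫ x in a..b, (p x - φ x * g x) :=
    intervalIntegral.integral_congr fun x _ => by ring
  rw [ge_iff_le, hweighted, hunweighted]
  exact mul_le_mul_of_nonneg_left key (sq_nonneg _)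

/-- Lemma 3.2: lower bound for the weighted integral over a half-period
[φ⁻¹(iπ+π/2), φ⁻¹(iπ+π/2+D)] in terms of the Prüfer radius at the right endpoint. -/
theorem weighted_integral_lower_bound
    (x₀ : ℝ) (hx₀ : 0 < x₀)
    (q : ℝ → ℝ) (hqc : ContinuousOn q (Icc 0 x₀))
    (hqnonneg : ∀ x ∈ Icc 0 x₀, 0 ≤ q x)
    (z : ℝ) (hz : 0 < z)
    (φ : ℝ → ℝ) (hφ0 : φ 0 = 0)
    (hφODE : ∀ x ∈ Icc 0 x₀, HasDerivAt φ (z - q x / z * Real.sin (φ x) ^ 2) x)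
    (r : ℝ → ℝ)
    (hr : ∀ x, r x = Real.exp (∫ t in (0:ℝ)..x, q t / z * Real.sin (φ t) * Real.cos (φ t)))
    (i : ℕ) (D : ℝ) (hD : D ∈ Icc 0 π)
    (a b : ℝ) (ha : a ∈ Ioc 0 x₀) (hb : b ∈ Ioc 0 x₀) (hab : a ≤ b)
    (hφa : φ a = i * π + π / 2) (hφb : φ b = i * π + π / 2 + D) :
    (∫ x in a..b, r x ^ 2 * (q x / z) *
        (Real.sin (φ x) ^ 2 - φ x * Real.sin (φ x) * Real.cos (φ x))) ≥
      r b ^ 2 *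
        ((∫ x in a..b, (q x / z) *
            (Real.sin (φ x) ^ 2 - φ x * Real.sin (φ x) * Real.cos (φ x)))
          - 2 * ∫ x in a..b, (q x / z) * Real.sin (φ x) * Real.cos (φ x) *
              (∫ s in a..x, (q s / z) * Real.sin (φ s) ^ 2)) :=
  weighted_integral_lower_bound_general x₀ q hqc hqnonneg z hz φ hφODE r hr i a b ha hb hab hφa
end

section
/- Let x₀ > 0, let q : [0,x₀] → ℝ be continuous and nonnegative, and let z > 0 satisfy z² > sup_{[0,x₀]} q, so that the Prüfer angle φ of q at z is strictly increasing on [0,x₀]. Let i ≥ 0 be an integer, D ∈ [0,π], and let a ≤ b in (0,x₀] satisfy φ(a) = iπ + π/2 and φ(b) = iπ + π/2 + D; let ψ denote the inverse of φ restricted to [a,b], and set Q(t) = q(ψ(t + (i+1)π))/z² for t ∈ [−π/2, −π/2 + D]. Then ∫ₐᵇ (q(x)/z)·(sin²φ(x) − φ(x)·sinφ(x)·cosφ(x)) dx = ∫_{−π/2}^{−π/2+D} Q(t)·(sin²t − t·sin t·cos t)/(1 − Q(t)·sin²t) dt − (i+1)π·∫_{−π/2}^{−π/2+D} Q(t)·sin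 t·cos t/(1 − Q(t)·sin²t) dt. -/
open Real Set

/-- The pointwise inverse of a strictly monotone function on a compact interval
is continuous. -/
lemma inv_continuousOn_aux {φ ψ : ℝ → ℝ} {a b : ℝ} (hab : a ≤ b)
    (hmono : StrictMonoOn φ (Icc a b))
    (hψ : ∀ t ∈ Icc (φ a) (φ b), ψ t ∈ Icc a b ∧ φ (ψ t) = t) :
    ContinuousOn ψ (Icc (φ a) (φ b)) := by
  have haI : a ∈ Icc a b := ⟨le_refl a, hab⟩
  have hbI : b ∈ Icc a b := ⟨hab, le_refl b⟩
  have hψmono : StrictMonoOn ψ (Icc (φ a) (φ b)) := by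
    intro s hs t ht hst
    by_contra h
    push_neg at h
    have h2 := hmono.monotoneOn (hψ t ht).1 (hψ s hs).1 h
    rw [(hψ t ht).2, (hψ s hs).2] at h2
    exact absurd h2 (not_le.2 hst)
  have himg : Icc a b ⊆ ψ '' (Icc (φ a) (φ b)) := by
    intro x hx
    have hφx : φ x ∈ Icc (φ a) (φ b) :=
      ⟨hmono.monotoneOn haI hx hx.1, hmono.monotoneOn hx hbI hx.2⟩
    exact ⟨φ x, hφx, hmono.injOn (hψ _ hφx).1 hx (hψ _ hφx).2⟩
  have hψa : ∀ t ∈ Icc (φ a) (φ b), φ a < t → a < ψ t := by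
    intro t ht h
    by_contra hc
    push_neg at hc
    have h2 := hmono.monotoneOn (hψ t ht).1 haI hc
    rw [(hψ t ht).2] at h2
    exact absurd h2 (not_le.2 h)
  have hψb : ∀ t ∈ Icc (φ a) (φ b), t < φ b → ψ t < b := by
    intro t ht h
    by_contra hc
    push_neg at hc
    have h2 := hmono.monotoneOn hbI (hψ t ht).1 hc
    rw [(hψ t ht).2] at h2
    exact absurd h2 (not_le.2 h)
  intro t ht
  have hr : t < φ b → ContinuousWithinAt ψ (Ici t) t := fun h =>
    hψmono.continuousWithinAt_right_of_image_mem_nhdsWithin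
      (Icc_mem_nhdsGE_of_mem ⟨ht.1, h⟩)
      (Filter.mem_of_superset
        (Icc_mem_nhdsGE_of_mem ⟨(hψ t ht).1.1, hψb t ht h⟩) himg)
  have hl : φ a < t → ContinuousWithinAt ψ (Iic t) t := fun h =>
    hψmono.continuousWithinAt_left_of_image_mem_nhdsWithin
      (Icc_mem_nhdsLE_of_mem ⟨h, ht.2⟩)
      (Filter.mem_of_superset
        (Icc_mem_nhdsLE_of_mem ⟨hψa t ht h, (hψ t ht).1.2⟩) himg)
  rcases eq_or_lt_of_le ht.1 with h1 | h1
  · rcases eq_or_lt_of_le ht.2 with h2 | h2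
    · have hset : Icc (φ a) (φ b) = {t} := by rw [h1, ← h2, Icc_self]
      rw [hset]
      exact continuousWithinAt_singleton
    · exact (hr h2).mono (fun s hs => by rw [← h1]; exact hs.1)
  · rcases eq_or_lt_of_le ht.2 with h2 | h2
    · exact (hl h1).mono (fun s hs => by rw [h2]; exact hs.2)
    · exact (continuousAt_iff_continuous_left_right.2
        ⟨hl h1, hr h2⟩).continuousWithinAt

/-- Lemma 3.3: substitution t = φ(x) − (i+1)π turns the half-period integral into
two integrals over [−π/2, −π/2+D]. -/
theorem half_period_integral_substitution
    (x₀ : ℝ) (hx₀ : 0 < x₀)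
    (q : ℝ → ℝ) (hqc : ContinuousOn q (Icc 0 x₀))
    (hqnonneg : ∀ x ∈ Icc 0 x₀, 0 ≤ q x)
    (z : ℝ) (hz : 0 < z)
    (hsup : ∀ x ∈ Icc 0 x₀, q x < z ^ 2)
    (φ : ℝ → ℝ) (hφ0 : φ 0 = 0)
    (hφODE : ∀ x ∈ Icc 0 x₀, HasDerivAt φ (z - q x / z * Real.sin (φ x) ^ 2) x)
    (i : ℕ) (D : ℝ) (hD : D ∈ Icc 0 π)
    (a b : ℝ) (ha : a ∈ Ioc 0 x₀) (hb : b ∈ Ioc 0 x₀) (hab : a ≤ b)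
    (hφa : φ a = i * π + π / 2) (hφb : φ b = i * π + π / 2 + D)
    (ψ : ℝ → ℝ)
    (hψ : ∀ t ∈ Icc (φ a) (φ b), ψ t ∈ Icc a b ∧ φ (ψ t) = t) :
    (∫ x in a..b, (q x / z) *
        (Real.sin (φ x) ^ 2 - φ x * Real.sin (φ x) * Real.cos (φ x))) =
      (∫ t in (-(π / 2))..(-(π / 2) + D),
          (q (ψ (t + ((i : ℝ) + 1) * π)) / z ^ 2) *
            (Real.sin t ^ 2 - t * Real.sin t * Real.cos t) /
            (1 - (q (ψ (t + ((i : ℝ) + 1) * π)) / z ^ 2) * Real.sin t ^ 2))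
        - ((i : ℝ) + 1) * π *
          ∫ t in (-(π / 2))..(-(π / 2) + D),
            (q (ψ (t + ((i : ℝ) + 1) * π)) / z ^ 2) * Real.sin t * Real.cos t /
              (1 - (q (ψ (t + ((i : ℝ) + 1) * π)) / z ^ 2) * Real.sin t ^ 2) := by
  have hzne : z ≠ 0 := ne_of_gt hz
  have habx : Icc a b ⊆ Icc 0 x₀ := Icc_subset_Icc ha.1.le hb.2
  -- continuity of φ on [0, x₀]
  have hφcont : ContinuousOn φ (Icc 0 x₀) := fun x hx =>
    ((hφODE x hx).continuousAt).continuousWithinAt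
  -- continuity of the derivative
  have hφ'cont : ContinuousOn (fun x => z - q x / z * Real.sin (φ x) ^ 2) (Icc 0 x₀) :=
    continuousOn_const.sub ((hqc.div_const z).mul
      ((Real.continuous_sin.comp_continuousOn hφcont).pow 2))
  -- positivity of the derivative
  have hφ'pos : ∀ x ∈ Icc 0 x₀, 0 < z - q x / z * Real.sin (φ x) ^ 2 := by
    intro x hx
    have h1 : Real.sin (φ x) ^ 2 ≤ 1 := Real.sin_sq_le_one (φ x)
    have h2 : 0 ≤ Real.sin (φ x) ^ 2 := sq_nonneg _
    have h3 : 0 ≤ q x := hqnonneg x hx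
    have h4 : q x < z ^ 2 := hsup x hx
    rw [sub_pos, div_mul_eq_mul_div, div_lt_iff₀ hz]
    nlinarith
  -- strict monotonicity of φ
  have hmono : StrictMonoOn φ (Icc 0 x₀) := by
    apply strictMonoOn_of_deriv_pos (convex_Icc 0 x₀) hφcont
    intro x hx
    rw [interior_Icc] at hx
    rw [(hφODE x (Ioo_subset_Icc_self hx)).deriv]
    exact hφ'pos x (Ioo_subset_Icc_self hx)
  have hmonoab : StrictMonoOn φ (Icc a b) := hmono.mono habx
  -- ψ inverts φ on [a, b]
  have hψφ : ∀ x ∈ Icc a b, ψ (φ x) = x := by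
    intro x hx
    have hφx : φ x ∈ Icc (φ a) (φ b) :=
      ⟨hmonoab.monotoneOn ⟨le_refl a, hab⟩ hx hx.1,
       hmonoab.monotoneOn hx ⟨hab, le_refl b⟩ hx.2⟩
    exact hmonoab.injOn (hψ _ hφx).1 hx (hψ _ hφx).2
  -- continuity of ψ
  have hψcont : ContinuousOn ψ (Icc (φ a) (φ b)) := inv_continuousOn_aux hab hmonoab hψ
  -- denominator positivity
  have hden : ∀ s ∈ Icc (φ a) (φ b), ∀ r : ℝ,
      0 < 1 - q (ψ s) / z ^ 2 * Real.sin r ^ 2 := by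
    intro s hs r
    have hm := habx (hψ s hs).1
    have h1 : Real.sin r ^ 2 ≤ 1 := Real.sin_sq_le_one r
    have h2 : 0 ≤ Real.sin r ^ 2 := sq_nonneg _
    have h3 : 0 ≤ q (ψ s) := hqnonneg _ hm
    have h4 : q (ψ s) < z ^ 2 := hsup _ hm
    have hz2 : (0:ℝ) < z ^ 2 := by positivity
    have h5 : q (ψ s) / z ^ 2 < 1 := (div_lt_one hz2).2 h4
    have h6 : 0 ≤ q (ψ s) / z ^ 2 := by positivity
    nlinarith
  -- the function g
  set g : ℝ → ℝ := fun t => q (ψ t) / z ^ 2 *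
      (Real.sin t ^ 2 - t * Real.sin t * Real.cos t) /
      (1 - q (ψ t) / z ^ 2 * Real.sin t ^ 2) with hg
  -- continuity of g on [φ a, φ b]
  have hQcont : ContinuousOn (fun t => q (ψ t) / z ^ 2) (Icc (φ a) (φ b)) :=
    (hqc.comp hψcont (fun t ht => habx (hψ t ht).1)).div_const _
  have htrig1 : Continuous fun t : ℝ =>
      Real.sin t ^ 2 - t * Real.sin t * Real.cos t :=
    (Real.continuous_sin.pow 2).sub ((continuous_id.mul Real.continuous_sin).mul Real.continuous_cos)
  have hgcont : ContinuousOn g (Icc (φ a) (φ b)) := by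
    apply ContinuousOn.div (hQcont.mul htrig1.continuousOn)
      (continuousOn_const.sub (hQcont.mul
        ((Real.continuous_sin.pow 2).continuousOn)))
    intro t ht
    exact ne_of_gt (hden t ht t)
  -- Step 1 : change of variables t = φ x
  have hφab : φ a ≤ φ b := hmonoab.monotoneOn ⟨le_refl a, hab⟩ ⟨hab, le_refl b⟩ hab
  have himage : φ '' (uIcc a b) ⊆ Icc (φ a) (φ b) := by
    rw [uIcc_of_le hab]
    rintro _ ⟨x, hx, rfl⟩
    exact ⟨hmonoab.monotoneOn ⟨le_refl a, hab⟩ hx hx.1,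
      hmonoab.monotoneOn hx ⟨hab, le_refl b⟩ hx.2⟩
  have step1 : (∫ x in a..b, (q x / z) *
      (Real.sin (φ x) ^ 2 - φ x * Real.sin (φ x) * Real.cos (φ x)))
      = ∫ t in (φ a)..(φ b), g t := by
    rw [← intervalIntegral.integral_comp_smul_deriv'
      (f := φ) (f' := fun x => z - q x / z * Real.sin (φ x) ^ 2) (g := g)
      (fun x hx => hφODE x (habx (by rwa [uIcc_of_le hab] at hx)))
      (hφ'cont.mono (by rw [uIcc_of_le hab]; exact habx))
      (hgcont.mono himage)]
    apply intervalIntegral.integral_congr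
    rw [uIcc_of_le hab]
    intro x hx
    have hφx : φ x ∈ Icc (φ a) (φ b) :=
      ⟨hmonoab.monotoneOn ⟨le_refl a, hab⟩ hx hx.1,
       hmonoab.monotoneOn hx ⟨hab, le_refl b⟩ hx.2⟩
    have hd : 1 - q x / z ^ 2 * Real.sin (φ x) ^ 2 ≠ 0 := by
      have := hden (φ x) hφx (φ x)
      rw [hψφ x hx] at this
      exact ne_of_gt this
    simp only [Function.comp_apply, smul_eq_mul, hg, hψφ x hx]
    have key : z - q x / z * Real.sin (φ x) ^ 2
        = z * (1 - q x / z ^ 2 * Real.sin (φ x) ^ 2) := by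
      field_simp
    rw [key, show z * (1 - q x / z ^ 2 * Real.sin (φ x) ^ 2) *
        (q x / z ^ 2 * (Real.sin (φ x) ^ 2 - φ x * Real.sin (φ x) * Real.cos (φ x)) /
          (1 - q x / z ^ 2 * Real.sin (φ x) ^ 2))
      = q x / z ^ 2 * (Real.sin (φ x) ^ 2 - φ x * Real.sin (φ x) * Real.cos (φ x)) /
          (1 - q x / z ^ 2 * Real.sin (φ x) ^ 2) *
          (1 - q x / z ^ 2 * Real.sin (φ x) ^ 2) * z from by ring,
      div_mul_cancel₀ _ hd]
    field_simp
  -- Step 2 : translation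
  have ea : -(π / 2) + ((i : ℝ) + 1) * π = φ a := by rw [hφa]; ring
  have eb : -(π / 2) + D + ((i : ℝ) + 1) * π = φ b := by rw [hφb]; ring
  have step2 : (∫ t in (φ a)..(φ b), g t)
      = ∫ t in (-(π / 2))..(-(π / 2) + D), g (t + ((i : ℝ) + 1) * π) := by
    rw [intervalIntegral.integral_comp_add_right, ea, eb]
  -- mapping of the shifted interval
  have hshift : ∀ t ∈ Icc (-(π / 2)) (-(π / 2) + D),
      t + ((i : ℝ) + 1) * π ∈ Icc (φ a) (φ b) := by
    intro t ht
    constructor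
    · rw [← ea]; linarith [ht.1]
    · rw [← eb]; linarith [ht.2]
  have hDle : -(π / 2) ≤ -(π / 2) + D := by linarith [hD.1]
  -- Step 3 : pointwise identity after the shift
  have step3 : ∀ t ∈ Icc (-(π / 2)) (-(π / 2) + D),
      g (t + ((i : ℝ) + 1) * π) =
        (q (ψ (t + ((i : ℝ) + 1) * π)) / z ^ 2) *
            (Real.sin t ^ 2 - t * Real.sin t * Real.cos t) /
            (1 - (q (ψ (t + ((i : ℝ) + 1) * π)) / z ^ 2) * Real.sin t ^ 2)
        - ((i : ℝ) + 1) * π *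
          ((q (ψ (t + ((i : ℝ) + 1) * π)) / z ^ 2) * Real.sin t * Real.cos t /
            (1 - (q (ψ (t + ((i : ℝ) + 1) * π)) / z ^ 2) * Real.sin t ^ 2)) := by
    intro t _
    have hsin := Real.sin_add_nat_mul_pi t (i + 1)
    have hcos := Real.cos_add_nat_mul_pi t (i + 1)
    push_cast at hsin hcos
    have he2 : ((-1 : ℝ) ^ (i + 1)) ^ 2 = 1 := by
      rw [← pow_mul, mul_comm, pow_mul, neg_one_sq, one_pow]
    have hs2 : Real.sin (t + ((i : ℝ) + 1) * π) ^ 2 = Real.sin t ^ 2 := by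
      rw [hsin, mul_pow, he2, one_mul]
    have hsc : Real.sin (t + ((i : ℝ) + 1) * π) * Real.cos (t + ((i : ℝ) + 1) * π)
        = Real.sin t * Real.cos t := by
      rw [hsin, hcos]
      linear_combination (Real.sin t * Real.cos t) * he2
    have h3 : (t + ((i : ℝ) + 1) * π) * Real.sin (t + ((i : ℝ) + 1) * π) *
        Real.cos (t + ((i : ℝ) + 1) * π)
        = (t + ((i : ℝ) + 1) * π) * (Real.sin t * Real.cos t) := by
      rw [mul_assoc, hsc]
    simp only [hg]
    rw [hs2, h3]
    ring
  -- integrability of the two pieces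
  have hQs : ContinuousOn (fun t => q (ψ (t + ((i : ℝ) + 1) * π)) / z ^ 2)
      (Icc (-(π / 2)) (-(π / 2) + D)) := by
    apply ContinuousOn.div_const
    apply hqc.comp (hψcont.comp
      (continuous_add_right (((i : ℝ) + 1) * π)).continuousOn hshift)
    intro t ht
    exact habx (hψ _ (hshift t ht)).1
  have hdens : ∀ t ∈ Icc (-(π / 2)) (-(π / 2) + D),
      (1 : ℝ) - q (ψ (t + ((i : ℝ) + 1) * π)) / z ^ 2 * Real.sin t ^ 2 ≠ 0 := by
    intro t ht
    exact ne_of_gt (hden _ (hshift t ht) t)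
  have hAcont : ContinuousOn (fun t =>
      (q (ψ (t + ((i : ℝ) + 1) * π)) / z ^ 2) *
        (Real.sin t ^ 2 - t * Real.sin t * Real.cos t) /
        (1 - (q (ψ (t + ((i : ℝ) + 1) * π)) / z ^ 2) * Real.sin t ^ 2))
      (Icc (-(π / 2)) (-(π / 2) + D)) :=
    ContinuousOn.div (hQs.mul htrig1.continuousOn)
      (continuousOn_const.sub (hQs.mul ((Real.continuous_sin.pow 2).continuousOn)))
      hdens
  have hBcont : ContinuousOn (fun t =>
      (q (ψ (t + ((i : ℝ) + 1) * π)) / z ^ 2) * Real.sin t * Real.cos t /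
        (1 - (q (ψ (t + ((i : ℝ) + 1) * π)) / z ^ 2) * Real.sin t ^ 2))
      (Icc (-(π / 2)) (-(π / 2) + D)) :=
    ContinuousOn.div ((hQs.mul Real.continuous_sin.continuousOn).mul
        Real.continuous_cos.continuousOn)
      (continuousOn_const.sub (hQs.mul ((Real.continuous_sin.pow 2).continuousOn)))
      hdens
  have hA : IntervalIntegrable (fun t =>
      (q (ψ (t + ((i : ℝ) + 1) * π)) / z ^ 2) *
        (Real.sin t ^ 2 - t * Real.sin t * Real.cos t) /
        (1 - (q (ψ (t + ((i : ℝ) + 1) * π)) / z ^ 2) * Real.sin t ^ 2))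
      MeasureTheory.volume (-(π / 2)) (-(π / 2) + D) :=
    (hAcont.mono (by rw [uIcc_of_le hDle])).intervalIntegrable
  have hB : IntervalIntegrable (fun t =>
      (q (ψ (t + ((i : ℝ) + 1) * π)) / z ^ 2) * Real.sin t * Real.cos t /
        (1 - (q (ψ (t + ((i : ℝ) + 1) * π)) / z ^ 2) * Real.sin t ^ 2))
      MeasureTheory.volume (-(π / 2)) (-(π / 2) + D) :=
    (hBcont.mono (by rw [uIcc_of_le hDle])).intervalIntegrable
  rw [step1, step2]
  rw [intervalIntegral.integral_congr (g := fun t =>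
      (q (ψ (t + ((i : ℝ) + 1) * π)) / z ^ 2) *
          (Real.sin t ^ 2 - t * Real.sin t * Real.cos t) /
          (1 - (q (ψ (t + ((i : ℝ) + 1) * π)) / z ^ 2) * Real.sin t ^ 2)
        - ((i : ℝ) + 1) * π *
          ((q (ψ (t + ((i : ℝ) + 1) * π)) / z ^ 2) * Real.sin t * Real.cos t /
            (1 - (q (ψ (t + ((i : ℝ) + 1) * π)) / z ^ 2) * Real.sin t ^ 2)))
      (by rw [uIcc_of_le hDle]; exact step3)]
  rw [intervalIntegral.integral_sub hA (hB.const_mul _),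
    intervalIntegral.integral_const_mul]
end

section
/- Let x₀ > 0, let q : [0,x₀] → ℝ be nonnegative, continuous and monotone increasing, and let z > 0 satisfy z² > q(x₀). Let φ be the Prüfer angle of q at z, let i ≥ 0 be an integer, D ∈ [π/2, π], and let a ≤ b in (0,x₀] satisfy φ(a) = iπ + π/2 and φ(b) = iπ + π/2 + D. Then (π/4)·( (q(a)/z²) / (1 − (3/4)·q(a)/z²) ) ≤ ∫ₐᵇ (q(x)/z)·sin²φ(x) dx ≤ (π/2)·( (q(b)/z²) / (1 − q(b)/z²) ). -/
/-!
Write `g_c θ = c sin²θ / (1 - c sin²θ)`. Since `φ' = z (1 - (q/z²) sin²φ)`, one has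
`φ' · g_c(φ) - (q/z) sin²φ = z sin²φ (c - q/z²) / (1 - c sin²φ)`, so after the substitution
`θ = φ x` the integral is squeezed between `∫_{φ a}^{φ b} g_c` for `c = q(a)/z²` and for
`c = q(b)/z²`, by monotonicity of `q`. With `c = 1 - k²`, `g_c` has an explicit primitive, and
over the quarter period `[iπ + π/2, iπ + π]` (contained in `[φ a, φ b]` since `D ≥ π/2`) it
integrates to `(π/2)(1/k - 1)`, which dominates the lower bound. For the upper bound,
`g_c ≤ c/(1-c) · sin²`, and `sin²` integrates to at most `π/2` over an interval of length `D ≤ π`.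
-/

open Real Set

noncomputable def sinSqRatio (c θ : ℝ) : ℝ := c * sin θ ^ 2 / (1 - c * sin θ ^ 2)

lemma one_sub_mul_sin_sq_pos {c : ℝ} (hc : c < 1) (θ : ℝ) : 0 < 1 - c * sin θ ^ 2 := by
  rcases le_or_gt c 0 with h | h
  · nlinarith [sq_nonneg (sin θ)]
  · nlinarith [sin_sq_le_one θ]

lemma continuous_sinSqRatio {c : ℝ} (hc : c < 1) : Continuous (sinSqRatio c) :=
  Continuous.div (by fun_prop) (by fun_prop) fun θ => (one_sub_mul_sin_sq_pos hc θ).ne'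

lemma sinSqRatio_nonneg {c : ℝ} (hc₀ : 0 ≤ c) (hc₁ : c < 1) (θ : ℝ) : 0 ≤ sinSqRatio c θ :=
  div_nonneg (by positivity) (one_sub_mul_sin_sq_pos hc₁ θ).le

lemma sinSqRatio_le {c : ℝ} (hc₀ : 0 ≤ c) (hc₁ : c < 1) (θ : ℝ) :
    sinSqRatio c θ ≤ c / (1 - c) * sin θ ^ 2 := by
  rw [div_mul_eq_mul_div]
  exact div_le_div_of_nonneg_left (by positivity) (by linarith)
    (by nlinarith [sin_sq_le_one θ])

lemma integral_sin_sq_le_pi_div_two {a b : ℝ} (hab : a ≤ b) (hb : b ≤ a + π) :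
    ∫ θ in a..b, sin θ ^ 2 ≤ π / 2 := calc
  ∫ θ in a..b, sin θ ^ 2 ≤ ∫ θ in a..a + π, sin θ ^ 2 :=
    intervalIntegral.integral_mono_interval le_rfl hab hb
      (Filter.Eventually.of_forall fun θ => sq_nonneg _)
      ((by fun_prop : Continuous fun θ => sin θ ^ 2).intervalIntegrable _ _)
  _ = π / 2 := by simp [integral_sin_sq, sin_add_pi, cos_add_pi]

lemma integral_sinSqRatio_le {c a b : ℝ} (hc₀ : 0 ≤ c) (hc₁ : c < 1) (hab : a ≤ b)
    (hb : b ≤ a + π) : ∫ θ in a..b, sinSqRatio c θ ≤ π / 2 * (c / (1 - c)) := calc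
  ∫ θ in a..b, sinSqRatio c θ ≤ ∫ θ in a..b, c / (1 - c) * sin θ ^ 2 :=
    intervalIntegral.integral_mono_on hab ((continuous_sinSqRatio hc₁).intervalIntegrable _ _)
      ((by fun_prop : Continuous _).intervalIntegrable _ _) fun θ _ => sinSqRatio_le hc₀ hc₁ θ
  _ = c / (1 - c) * ∫ θ in a..b, sin θ ^ 2 := intervalIntegral.integral_const_mul _ _
  _ ≤ c / (1 - c) * (π / 2) :=
    mul_le_mul_of_nonneg_left (integral_sin_sq_le_pi_div_two hab hb)
      (div_nonneg hc₀ (by linarith))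
  _ = π / 2 * (c / (1 - c)) := mul_comm _ _

/-- A continuous branch of `arctan (k tan θ) / k - θ`. -/
noncomputable def sinSqRatioPrimitive (k θ : ℝ) : ℝ :=
  (θ - arctan ((1 - k) * sin θ * cos θ / (cos θ ^ 2 + k * sin θ ^ 2))) / k - θ

lemma hasDerivAt_sinSqRatioPrimitive {k : ℝ} (hk : 0 < k) (θ : ℝ) :
    HasDerivAt (sinSqRatioPrimitive k) (sinSqRatio (1 - k ^ 2) θ) θ := by
  have hpy := sin_sq_add_cos_sq θ
  have hden : 0 < cos θ ^ 2 + k * sin θ ^ 2 := by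
    linarith [one_sub_mul_sin_sq_pos (c := 1 - k) (by linarith) θ]
  have hnum : HasDerivAt (fun t => (1 - k) * sin t * cos t)
      ((1 - k) * cos θ * cos θ + (1 - k) * sin θ * -sin θ) θ :=
    ((hasDerivAt_sin θ).const_mul _).mul (hasDerivAt_cos θ)
  have hdenom : HasDerivAt (fun t => cos t ^ 2 + k * sin t ^ 2)
      (2 * cos θ * -sin θ + k * (2 * sin θ * cos θ)) θ :=
    (((hasDerivAt_cos θ).pow 2).add (((hasDerivAt_sin θ).pow 2).const_mul k)).congr_deriv
      (by push_cast; ring)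
  have harctan := ((hasDerivAt_id θ).sub ((hnum.div hdenom hden.ne').arctan)).div_const k
  refine (harctan.sub (hasDerivAt_id θ)).congr_deriv ?_
  have h1 : 0 < 1 - (1 - k ^ 2) * sin θ ^ 2 := one_sub_mul_sin_sq_pos (by nlinarith) θ
  simp only [sinSqRatio, Pi.div_apply]
  generalize sin θ = s, cos θ = c at *
  field_simp
  rw [eq_div_iff (by linarith)]
  linear_combination (k ^ 3 - k) * s ^ 2 * (s ^ 2 + c ^ 2) * hpy

lemma sinSqRatioPrimitive_of_sin_mul_cos_eq_zero {k θ : ℝ} (h : sin θ * cos θ = 0) :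
    sinSqRatioPrimitive k θ = θ * (1 / k - 1) := by
  simp [sinSqRatioPrimitive, mul_assoc, h]
  ring

lemma integral_sinSqRatio_eq {k t₁ t₂ : ℝ} (hk : 0 < k) (h₁ : sin t₁ * cos t₁ = 0)
    (h₂ : sin t₂ * cos t₂ = 0) :
    ∫ θ in t₁..t₂, sinSqRatio (1 - k ^ 2) θ = (t₂ - t₁) * (1 / k - 1) := by
  rw [intervalIntegral.integral_eq_sub_of_hasDerivAt
    (fun θ _ => hasDerivAt_sinSqRatioPrimitive hk θ)
    ((continuous_sinSqRatio (by nlinarith)).intervalIntegrable _ _),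
    sinSqRatioPrimitive_of_sin_mul_cos_eq_zero h₁, sinSqRatioPrimitive_of_sin_mul_cos_eq_zero h₂]
  ring

lemma div_one_sub_three_quarters_le {k : ℝ} (hk₀ : 0 < k) (hk₁ : k ≤ 1) :
    (1 - k ^ 2) / (1 - 3 / 4 * (1 - k ^ 2)) ≤ 2 * (1 / k - 1) := by
  have key :
      2 * (1 / k - 1) * (1 - 3 / 4 * (1 - k ^ 2)) - (1 - k ^ 2) = (1 - k) ^ 3 / (2 * k) := by
    field_simp
    ring
  rw [div_le_iff₀ (by nlinarith), ← sub_nonneg, key]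
  exact div_nonneg (pow_nonneg (by linarith) 3) (by positivity)

lemma pi_div_four_mul_le_integral_sinSqRatio {c t₁ t₂ : ℝ} (hc₀ : 0 ≤ c) (hc₁ : c < 1)
    (h₁ : sin t₁ * cos t₁ = 0) (ht : t₁ + π / 2 ≤ t₂) :
    π / 4 * (c / (1 - 3 / 4 * c)) ≤ ∫ θ in t₁..t₂, sinSqRatio c θ := by
  obtain ⟨k, hk₀, hk₁, rfl⟩ : ∃ k, 0 < k ∧ k ≤ 1 ∧ c = 1 - k ^ 2 :=
    ⟨√(1 - c), by positivity, by simp [sqrt_le_one, hc₀], by rw [sq_sqrt (by linarith)]; ring⟩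
  have h₂ : sin (t₁ + π / 2) * cos (t₁ + π / 2) = 0 := by
    rw [sin_add_pi_div_two, cos_add_pi_div_two]; linarith
  calc π / 4 * ((1 - k ^ 2) / (1 - 3 / 4 * (1 - k ^ 2))) ≤ π / 4 * (2 * (1 / k - 1)) :=
        mul_le_mul_of_nonneg_left (div_one_sub_three_quarters_le hk₀ hk₁) (by positivity)
    _ = ∫ θ in t₁..t₁ + π / 2, sinSqRatio (1 - k ^ 2) θ := by
        rw [integral_sinSqRatio_eq hk₀ h₁ h₂]; ring
    _ ≤ ∫ θ in t₁..t₂, sinSqRatio (1 - k ^ 2) θ :=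
        intervalIntegral.integral_mono_interval le_rfl (by linarith [pi_pos]) ht
          (Filter.Eventually.of_forall (sinSqRatio_nonneg (by nlinarith) (by nlinarith)))
          ((continuous_sinSqRatio (by nlinarith)).intervalIntegrable _ _)

section Pruefer

variable {q φ : ℝ → ℝ} {z a b c : ℝ}

lemma pruefer_deriv_mul_sinSqRatio_sub (hz : z ≠ 0) (hc : c < 1) (Q θ : ℝ) :
    (z - Q / z * sin θ ^ 2) * sinSqRatio c θ - Q / z * sin θ ^ 2 =
      z * sin θ ^ 2 * (c - Q / z ^ 2) / (1 - c * sin θ ^ 2) := by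
  have hE := (one_sub_mul_sin_sq_pos hc θ).ne'
  rw [eq_div_iff hE, sinSqRatio, sub_mul, mul_assoc, div_mul_cancel₀ _ hE]
  field_simp
  ring

lemma integral_sinSqRatio_sub_integral_pruefer (hab : a ≤ b) (hz : z ≠ 0)
    (hq : ContinuousOn q (Icc a b))
    (hφ : ∀ x ∈ Icc a b, HasDerivAt φ (z - q x / z * sin (φ x) ^ 2) x) (hc : c < 1) :
    (∫ θ in φ a..φ b, sinSqRatio c θ) - ∫ x in a..b, q x / z * sin (φ x) ^ 2 =
      ∫ x in a..b, z * sin (φ x) ^ 2 * (c - q x / z ^ 2) / (1 - c * sin (φ x) ^ 2) := by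
  have hφc : ContinuousOn φ (Icc a b) :=
    continuousOn_of_forall_continuousAt fun x hx => (hφ x hx).continuousAt
  have hqφ : ContinuousOn (fun x => q x / z * sin (φ x) ^ 2) (Icc a b) :=
    (hq.div_const z).mul ((continuous_sin.comp_continuousOn hφc).pow 2)
  have hφ' : ContinuousOn (fun x => z - q x / z * sin (φ x) ^ 2) (Icc a b) :=
    continuousOn_const.sub hqφ
  rw [← uIcc_of_le hab] at hφ hφ' hqφ hφc
  rw [← intervalIntegral.integral_comp_mul_deriv hφ hφ' (continuous_sinSqRatio hc),
    ← intervalIntegral.integral_sub _ hqφ.intervalIntegrable]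
  · refine intervalIntegral.integral_congr fun x _ => ?_
    simp only [Function.comp, mul_comm (sinSqRatio c (φ x))]
    exact pruefer_deriv_mul_sinSqRatio_sub hz hc (q x) (φ x)
  · exact (((continuous_sinSqRatio hc).comp_continuousOn hφc).mul hφ').intervalIntegrable

lemma integral_sinSqRatio_le_integral_pruefer (hab : a ≤ b) (hz : 0 < z)
    (hq : ContinuousOn q (Icc a b))
    (hφ : ∀ x ∈ Icc a b, HasDerivAt φ (z - q x / z * sin (φ x) ^ 2) x) (hc : c < 1)
    (hcq : ∀ x ∈ Icc a b, c ≤ q x / z ^ 2) :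
    ∫ θ in φ a..φ b, sinSqRatio c θ ≤ ∫ x in a..b, q x / z * sin (φ x) ^ 2 := by
  rw [← sub_nonpos, integral_sinSqRatio_sub_integral_pruefer hab hz.ne' hq hφ hc, ← neg_nonneg,
    ← intervalIntegral.integral_neg]
  refine intervalIntegral.integral_nonneg hab fun x hx => ?_
  rw [← neg_div, ← mul_neg]
  exact div_nonneg (mul_nonneg (by positivity) (by linarith [hcq x hx]))
    (one_sub_mul_sin_sq_pos hc _).le

lemma integral_pruefer_le_integral_sinSqRatio (hab : a ≤ b) (hz : 0 < z)
    (hq : ContinuousOn q (Icc a b))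
    (hφ : ∀ x ∈ Icc a b, HasDerivAt φ (z - q x / z * sin (φ x) ^ 2) x) (hc : c < 1)
    (hqc : ∀ x ∈ Icc a b, q x / z ^ 2 ≤ c) :
    ∫ x in a..b, q x / z * sin (φ x) ^ 2 ≤ ∫ θ in φ a..φ b, sinSqRatio c θ := by
  rw [← sub_nonneg, integral_sinSqRatio_sub_integral_pruefer hab hz.ne' hq hφ hc]
  exact intervalIntegral.integral_nonneg hab fun x hx =>
    div_nonneg (mul_nonneg (by positivity) (by linarith [hqc x hx]))
      (one_sub_mul_sin_sq_pos hc _).le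

end Pruefer

theorem half_period_sin_sq_integral_bounds_general
    (x₀ : ℝ)
    (q : ℝ → ℝ) (hqc : ContinuousOn q (Icc 0 x₀))
    (hqnonneg : ∀ x ∈ Icc 0 x₀, 0 ≤ q x)
    (hmono : MonotoneOn q (Icc 0 x₀))
    (z : ℝ) (hz : 0 < z) (hsup : q x₀ < z ^ 2)
    (φ : ℝ → ℝ)
    (hφODE : ∀ x ∈ Icc 0 x₀, HasDerivAt φ (z - q x / z * Real.sin (φ x) ^ 2) x)
    (i : ℕ) (D : ℝ) (hD : D ∈ Icc (π / 2) π)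
    (a b : ℝ) (ha : a ∈ Ioc 0 x₀) (hb : b ∈ Ioc 0 x₀) (hab : a ≤ b)
    (hφa : φ a = i * π + π / 2) (hφb : φ b = i * π + π / 2 + D) :
    π / 4 * ((q a / z ^ 2) / (1 - 3 / 4 * (q a / z ^ 2))) ≤
        (∫ x in a..b, (q x / z) * Real.sin (φ x) ^ 2) ∧
      (∫ x in a..b, (q x / z) * Real.sin (φ x) ^ 2) ≤
        π / 2 * ((q b / z ^ 2) / (1 - q b / z ^ 2)) := by
  have haI : a ∈ Icc 0 x₀ := Ioc_subset_Icc_self ha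
  have hbI : b ∈ Icc 0 x₀ := Ioc_subset_Icc_self hb
  have hsub : Icc a b ⊆ Icc 0 x₀ := Icc_subset_Icc haI.1 hbI.2
  have hz2 : 0 < z ^ 2 := by positivity
  have hqz : ∀ x ∈ Icc a b, q a / z ^ 2 ≤ q x / z ^ 2 ∧ q x / z ^ 2 ≤ q b / z ^ 2 := fun x hx =>
    ⟨div_le_div_of_nonneg_right (hmono haI (hsub hx) hx.1) hz2.le,
      div_le_div_of_nonneg_right (hmono (hsub hx) hbI hx.2) hz2.le⟩
  have hqb : q b / z ^ 2 < 1 :=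
    (div_lt_one hz2).2 ((hmono hbI ⟨hbI.1.trans hb.2, le_rfl⟩ hb.2).trans_lt hsup)
  have hqa : q a / z ^ 2 < 1 := ((hqz a ⟨le_rfl, hab⟩).2).trans_lt hqb
  have hφab : ∀ x ∈ Icc a b, HasDerivAt φ (z - q x / z * sin (φ x) ^ 2) x :=
    fun x hx => hφODE x (hsub hx)
  have hφa_sin_mul_cos : sin (φ a) * cos (φ a) = 0 := by
    simp [hφa, cos_add_pi_div_two, sin_nat_mul_pi]
  constructor
  · calc π / 4 * ((q a / z ^ 2) / (1 - 3 / 4 * (q a / z ^ 2)))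
        ≤ ∫ θ in φ a..φ b, sinSqRatio (q a / z ^ 2) θ :=
          pi_div_four_mul_le_integral_sinSqRatio (div_nonneg (hqnonneg a haI) hz2.le) hqa
            hφa_sin_mul_cos (by linarith [hD.1])
      _ ≤ _ := integral_sinSqRatio_le_integral_pruefer hab hz (hqc.mono hsub) hφab hqa
          fun x hx => (hqz x hx).1
  · calc ∫ x in a..b, (q x / z) * sin (φ x) ^ 2
        ≤ ∫ θ in φ a..φ b, sinSqRatio (q b / z ^ 2) θ :=
          integral_pruefer_le_integral_sinSqRatio hab hz (hqc.mono hsub) hφab hqb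
            fun x hx => (hqz x hx).2
      _ ≤ _ := integral_sinSqRatio_le (div_nonneg (hqnonneg b hbI) hz2.le) hqb
          (by linarith [hD.1, pi_pos]) (by linarith [hD.2])

/-- Lemma 3.4 i): two-sided bounds for ∫ₐᵇ (q/z)·sin²φ over a half-period, for
increasing potentials with z² > q(x₀). -/
theorem half_period_sin_sq_integral_bounds
    (x₀ : ℝ) (hx₀ : 0 < x₀)
    (q : ℝ → ℝ) (hqc : ContinuousOn q (Icc 0 x₀))
    (hqnonneg : ∀ x ∈ Icc 0 x₀, 0 ≤ q x)
    (hmono : MonotoneOn q (Icc 0 x₀))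
    (z : ℝ) (hz : 0 < z) (hsup : q x₀ < z ^ 2)
    (φ : ℝ → ℝ) (hφ0 : φ 0 = 0)
    (hφODE : ∀ x ∈ Icc 0 x₀, HasDerivAt φ (z - q x / z * Real.sin (φ x) ^ 2) x)
    (i : ℕ) (D : ℝ) (hD : D ∈ Icc (π / 2) π)
    (a b : ℝ) (ha : a ∈ Ioc 0 x₀) (hb : b ∈ Ioc 0 x₀) (hab : a ≤ b)
    (hφa : φ a = i * π + π / 2) (hφb : φ b = i * π + π / 2 + D) :
    π / 4 * ((q a / z ^ 2) / (1 - 3 / 4 * (q a / z ^ 2))) ≤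
        (∫ x in a..b, (q x / z) * Real.sin (φ x) ^ 2) ∧
      (∫ x in a..b, (q x / z) * Real.sin (φ x) ^ 2) ≤
        π / 2 * ((q b / z ^ 2) / (1 - q b / z ^ 2)) :=
  half_period_sin_sq_integral_bounds_general x₀ q hqc hqnonneg hmono z hz hsup φ hφODE i D hD a b ha
    hb hab hφa hφb
end

section
/- Let x₀ > 0, let q : [0,x₀] → ℝ be nonnegative, continuous and monotone increasing, and let z > 0 satisfy z² > q(x₀). Let φ be the Prüfer angle of q at z, let i ≥ 0 be an integer, D ∈ [π/2, π], and let a ≤ b in (0,x₀] satisfy φ(a) = iπ + π/2 and φ(b) = iπ + π/2 + D; let ψ denote the inverse of φ restricted to [a,b] and set Q(t) = q(ψ(t + (i+1)π))/z², and A = q(a)/z². Then ∫_{−π/2}^{−π/2+D} Q(t)·(sin²t − t·sin t·cos t)/(1 − Q(t)·sin²t) dt ≥ (π/4)·A/(1 − (3/4)·A) + (π/4)·log(1 − A) − (π/6)·log(1 − (3/4)·A). -/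
/-!
The integrand `Q g(t) / (1 - Q sin² t)`, `g(t) = sin² t - t sin t cos t`, is increasing in `Q`,
and `Q ≥ A` because `ψ` is increasing (the Prüfer angle has positive derivative since `z² > q`)
and `q` is monotone. So the integral is at least the one with `Q` replaced by `A`, and, since `g ≥ 0`
on `[-π/2, π/2]`, at least its part over `[-π/2, 0]`. Integrating the `t sin t cos t` term by parts
turns this into `π/4 · log (1 - A) + ∫ f (A sin² t)` with
`f x = x / (1 - x) - log (1 - x) / 2 = ∑ (1 + 1/(2(n+1))) x^(n+1)`. Integrating termwise and using the
Wallis bound `∫_{-π/2}^0 sin^(2n) ≥ π/3 · (3/4)^n` for `n ≥ 1` gives `∫ f (A sin² t) ≥ π/3 · f (3A/4)`.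
-/

open Real Set MeasureTheory intervalIntegral

lemma mul_cos_le_sin {t : ℝ} (h0 : 0 ≤ t) (h1 : t ≤ π / 2) : t * cos t ≤ sin t := by
  rcases h1.lt_or_eq with h1 | rfl
  · have hcos : 0 < cos t := cos_pos_of_mem_Ioo ⟨by linarith [pi_pos], h1⟩
    rw [← le_div_iff₀ hcos, ← tan_eq_sin_div_cos]
    exact le_tan h0 h1
  · simp

lemma sin_sq_sub_mul_sin_mul_cos_nonneg {t : ℝ} (ht : |t| ≤ π / 2) :
    0 ≤ sin t ^ 2 - t * sin t * cos t := by
  have key : ∀ s : ℝ, 0 ≤ s → s ≤ π / 2 → 0 ≤ sin s * (sin s - s * cos s) := fun s h0 h1 =>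
    mul_nonneg (sin_nonneg_of_nonneg_of_le_pi h0 (by linarith [pi_pos]))
      (sub_nonneg.2 (mul_cos_le_sin h0 h1))
  rw [abs_le] at ht
  rcases le_total 0 t with h | h
  · linarith [key t h ht.2]
  · have := key (-t) (by linarith) (by linarith)
    simp only [sin_neg, cos_neg] at this
    linarith

lemma one_sub_mul_sin_sq_pos_s9 {A : ℝ} (hA : A < 1) (t : ℝ) : 0 < 1 - A * sin t ^ 2 := by
  have h1 := sin_sq_le_one t
  have h0 := sq_nonneg (sin t)
  rcases le_total 0 A with hA0 | hA0 <;> nlinarith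

noncomputable def substitutedIntegrand (A t : ℝ) : ℝ :=
  A * (sin t ^ 2 - t * sin t * cos t) / (1 - A * sin t ^ 2)

lemma substitutedIntegrand_nonneg {A t : ℝ} (hA0 : 0 ≤ A) (hA1 : A < 1) (ht : |t| ≤ π / 2) :
    0 ≤ substitutedIntegrand A t :=
  div_nonneg (mul_nonneg hA0 (sin_sq_sub_mul_sin_mul_cos_nonneg ht))
    (one_sub_mul_sin_sq_pos_s9 hA1 t).le

lemma substitutedIntegrand_mono {A B t : ℝ} (hAB : A ≤ B) (hB : B < 1) (ht : |t| ≤ π / 2) :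
    substitutedIntegrand A t ≤ substitutedIntegrand B t := by
  have hg := sin_sq_sub_mul_sin_mul_cos_nonneg ht
  unfold substitutedIntegrand
  rw [div_le_div_iff₀ (one_sub_mul_sin_sq_pos_s9 (hAB.trans_lt hB) t) (one_sub_mul_sin_sq_pos_s9 hB t)]
  nlinarith [mul_nonneg hg (sub_nonneg.2 hAB)]

lemma continuous_substitutedIntegrand {A : ℝ} (hA : A < 1) :
    Continuous (substitutedIntegrand A) := by
  unfold substitutedIntegrand
  exact Continuous.div (by fun_prop) (by fun_prop) fun t => (one_sub_mul_sin_sq_pos_s9 hA t).ne'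

lemma measurable_substitutedIntegrand : Measurable (Function.uncurry substitutedIntegrand) := by
  unfold substitutedIntegrand Function.uncurry
  fun_prop

lemma intervalIntegrable_substitutedIntegrand_comp {P : ℝ → ℝ} {M a b : ℝ} (hM : M < 1)
    (hab : a ≤ b) (hsub : Icc a b ⊆ Icc (-(π / 2)) (π / 2))
    (hP : AEMeasurable P (volume.restrict (Icc a b))) (hPb : ∀ t ∈ Icc a b, P t ∈ Icc 0 M) :
    IntervalIntegrable (fun t => substitutedIntegrand (P t) t) volume a b := by
  rw [intervalIntegrable_iff_integrableOn_Icc_of_le hab]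
  have hmeas := measurable_substitutedIntegrand.comp_aemeasurable (hP.prodMk aemeasurable_id)
  refine (continuous_substitutedIntegrand hM).integrableOn_Icc.mono' hmeas.aestronglyMeasurable ?_
  filter_upwards [ae_restrict_mem measurableSet_Icc] with t ht
  have hPt := hPb t ht
  have habs : |t| ≤ π / 2 := abs_le.2 (hsub ht)
  rw [norm_of_nonneg (substitutedIntegrand_nonneg hPt.1 (hPt.2.trans_lt hM) habs)]
  exact substitutedIntegrand_mono hPt.2 hM habs

noncomputable def ratioLog (x : ℝ) : ℝ := x / (1 - x) - log (1 - x) / 2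

lemma hasSum_ratioLog {x : ℝ} (hx : |x| < 1) :
    HasSum (fun n : ℕ => (1 + 1 / (2 * (n + 1))) * x ^ (n + 1)) (ratioLog x) := by
  have hgeom : HasSum (fun n : ℕ => x ^ (n + 1)) (x / (1 - x)) := by
    simpa only [pow_succ', div_eq_mul_inv] using (hasSum_geometric_of_abs_lt_one hx).mul_left x
  have hlog : HasSum (fun n : ℕ => x ^ (n + 1) / (n + 1)) (-log (1 - x)) := by
    exact_mod_cast hasSum_pow_div_log_of_abs_lt_one hx
  convert hgeom.add (hlog.div_const 2) using 1
  · funext n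
    field_simp
  · unfold ratioLog
    ring

lemma continuous_ratioLog_mul_sin_sq {A : ℝ} (hA : A < 1) :
    Continuous fun t => ratioLog (A * sin t ^ 2) := by
  have hne : ∀ t, 1 - A * sin t ^ 2 ≠ 0 := fun t => (one_sub_mul_sin_sq_pos_s9 hA t).ne'
  unfold ratioLog
  exact (Continuous.div (by fun_prop) (by fun_prop) hne).sub
    ((Continuous.log (by fun_prop) hne).div_const 2)

lemma integral_sin_pow_succ_succ (n : ℕ) :
    ∫ t in -(π / 2)..0, sin t ^ (n + 2) = (n + 1) / (n + 2) * ∫ t in -(π / 2)..0, sin t ^ n := by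
  simp [integral_sin_pow]

/-- The ratio of consecutive even moments is `(2n+1)/(2n+2)`, which is `≥ 3/4` from `n = 1` on. -/
lemma le_integral_sin_pow_two_mul (n : ℕ) :
    π / 3 * (3 / 4) ^ (n + 1) ≤ ∫ t in -(π / 2)..0, sin t ^ (2 * (n + 1)) := by
  induction n with
  | zero => norm_num [integral_sin_pow_succ_succ 0]; linarith [pi_pos]
  | succ n ih =>
    rw [show 2 * (n + 1 + 1) = 2 * (n + 1) + 2 by ring, integral_sin_pow_succ_succ, pow_succ]
    have hratio : (3 : ℝ) / 4 ≤ ((2 * (n + 1) : ℕ) + 1) / ((2 * (n + 1) : ℕ) + 2) := by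
      rw [div_le_div_iff₀ (by norm_num) (by positivity)]
      push_cast
      linarith [(n.cast_nonneg : (0 : ℝ) ≤ n)]
    rw [← mul_assoc, mul_comm _ (3 / 4 : ℝ)]
    exact (mul_le_mul_of_nonneg_left ih (by norm_num)).trans
      (mul_le_mul_of_nonneg_right hratio (ih.trans' (by positivity)))

lemma hasSum_integral_ratioLog_mul_sin_sq {A : ℝ} (h0 : 0 ≤ A) (h1 : A < 1) :
    HasSum (fun n : ℕ => (1 + 1 / (2 * (n + 1))) * A ^ (n + 1) *
        ∫ t in -(π / 2)..0, sin t ^ (2 * (n + 1)))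
      (∫ t in -(π / 2)..0, ratioLog (A * sin t ^ 2)) := by
  set F : ℕ → ℝ → ℝ := fun n t => (1 + 1 / (2 * (n + 1))) * (A * sin t ^ 2) ^ (n + 1)
  have hF : ∀ t, HasSum (fun n => F n t) (ratioLog (A * sin t ^ 2)) := fun t =>
    hasSum_ratioLog <| abs_lt.2 ⟨by nlinarith [sq_nonneg (sin t)],
      by nlinarith [sin_sq_le_one t, sq_nonneg (sin t)]⟩
  have hterm : ∀ n, ∫ t in -(π / 2)..0, F n t =
      (1 + 1 / (2 * (n + 1))) * A ^ (n + 1) * ∫ t in -(π / 2)..0, sin t ^ (2 * (n + 1)) := by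
    intro n
    simp only [F, mul_pow, ← pow_mul, mul_assoc, intervalIntegral.integral_const_mul]
  simp only [← hterm]
  -- Dominated convergence, with the nonnegative series dominating itself.
  refine hasSum_integral_of_dominated_convergence F (fun n => by fun_prop) (fun n => ?_)
    (.of_forall fun t _ => (hF t).summable) ?_ (.of_forall fun t _ => hF t)
  · refine .of_forall fun t _ => (Real.norm_of_nonneg ?_).le
    positivity
  · simp only [fun t => (hF t).tsum_eq]
    exact (continuous_ratioLog_mul_sin_sq h1).intervalIntegrable _ _

lemma le_integral_ratioLog_mul_sin_sq {A : ℝ} (h0 : 0 ≤ A) (h1 : A < 1) :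
    π / 3 * ratioLog (3 / 4 * A) ≤ ∫ t in -(π / 2)..0, ratioLog (A * sin t ^ 2) := by
  have hx : |3 / 4 * A| < 1 := by rw [abs_lt]; constructor <;> linarith
  refine hasSum_le (fun n => ?_) ((hasSum_ratioLog hx).mul_left (π / 3))
    (hasSum_integral_ratioLog_mul_sin_sq h0 h1)
  calc π / 3 * ((1 + 1 / (2 * (n + 1))) * (3 / 4 * A) ^ (n + 1))
      = (1 + 1 / (2 * (n + 1))) * A ^ (n + 1) * (π / 3 * (3 / 4) ^ (n + 1)) := by ring
    _ ≤ _ := by gcongr; exact le_integral_sin_pow_two_mul n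

/-- Integration by parts against `d/dt (t/2 · log (1 - A sin² t))`. -/
lemma integral_substitutedIntegrand_eq {A : ℝ} (hA : A < 1) :
    ∫ t in -(π / 2)..0, substitutedIntegrand A t =
      (∫ t in -(π / 2)..0, ratioLog (A * sin t ^ 2)) + π / 4 * log (1 - A) := by
  have hne : ∀ t, 1 - A * sin t ^ 2 ≠ 0 := fun t => (one_sub_mul_sin_sq_pos_s9 hA t).ne'
  set w' : ℝ → ℝ := fun t =>
    log (1 - A * sin t ^ 2) / 2 - t * (A * sin t * cos t) / (1 - A * sin t ^ 2)
  have hw' : Continuous w' := ((Continuous.log (by fun_prop) hne).div_const 2).sub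
    (Continuous.div (by fun_prop) (by fun_prop) hne)
  have hderiv : ∀ t, HasDerivAt (fun t => t / 2 * log (1 - A * sin t ^ 2)) (w' t) t := by
    intro t
    have := ((hasDerivAt_id' t).div_const 2).fun_mul
      ((((hasDerivAt_sin t).fun_pow 2).const_mul A).const_sub 1 |>.log (hne t))
    refine this.congr_deriv ?_
    simp only [w']
    field_simp
    ring
  have hsplit : substitutedIntegrand A = fun t => ratioLog (A * sin t ^ 2) + w' t := by
    funext t
    simp only [substitutedIntegrand, ratioLog, w']
    field_simp [hne t]
    ring
  rw [hsplit, integral_add ((continuous_ratioLog_mul_sin_sq hA).intervalIntegrable _ _)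
    (hw'.intervalIntegrable _ _), integral_eq_sub_of_hasDerivAt (fun t _ => hderiv t)
    (hw'.intervalIntegrable _ _)]
  simp
  ring

theorem le_integral_substitutedIntegrand {A M D : ℝ} {P : ℝ → ℝ} (hA : 0 ≤ A) (hM : M < 1)
    (hD : D ∈ Icc (π / 2) π)
    (hP : AEMeasurable P (volume.restrict (Icc (-(π / 2)) (-(π / 2) + D))))
    (hPb : ∀ t ∈ Icc (-(π / 2)) (-(π / 2) + D), P t ∈ Icc A M) :
    π / 4 * (A / (1 - 3 / 4 * A)) + π / 4 * log (1 - A) - π / 6 * log (1 - 3 / 4 * A) ≤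
      ∫ t in -(π / 2)..-(π / 2) + D, substitutedIntegrand (P t) t := by
  obtain ⟨hD1, hD2⟩ := hD
  have hle : -(π / 2) ≤ -(π / 2) + D := by linarith
  have hA1 : A < 1 := ((hPb _ ⟨le_rfl, hle⟩).1.trans (hPb _ ⟨le_rfl, hle⟩).2).trans_lt hM
  have hsub : Icc (-(π / 2)) (-(π / 2) + D) ⊆ Icc (-(π / 2)) (π / 2) :=
    Icc_subset_Icc_right (by linarith)
  have hAint := (continuous_substitutedIntegrand hA1).intervalIntegrable (μ := volume)
  calc _ = π / 3 * ratioLog (3 / 4 * A) + π / 4 * log (1 - A) := by unfold ratioLog; ring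
    _ ≤ ∫ t in -(π / 2)..0, substitutedIntegrand A t := by
      rw [integral_substitutedIntegrand_eq hA1]
      gcongr
      exact le_integral_ratioLog_mul_sin_sq hA hA1
    _ ≤ ∫ t in -(π / 2)..-(π / 2) + D, substitutedIntegrand A t := by
      refine integral_mono_interval le_rfl (by linarith [pi_pos]) (by linarith) ?_ (hAint _ _)
      filter_upwards [ae_restrict_mem measurableSet_Ioc] with t ht
      exact substitutedIntegrand_nonneg hA hA1 (abs_le.2 (hsub (Ioc_subset_Icc_self ht)))
    _ ≤ _ := by
      refine integral_mono_on hle (hAint _ _) (intervalIntegrable_substitutedIntegrand_comp hM hle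
        hsub hP fun t ht => ⟨hA.trans (hPb t ht).1, (hPb t ht).2⟩) fun t ht => ?_
      exact substitutedIntegrand_mono (hPb t ht).1 ((hPb t ht).2.trans_lt hM) (abs_le.2 (hsub ht))

lemma strictMonoOn_of_hasDerivAt_pruferAngle {q φ : ℝ → ℝ} {z : ℝ} {s : Set ℝ}
    (hs : Convex ℝ s) (hz : 0 < z) (hq : ∀ x ∈ s, q x < z ^ 2)
    (hφ : ∀ x ∈ s, HasDerivAt φ (z - q x / z * sin (φ x) ^ 2) x) : StrictMonoOn φ s := by
  refine strictMonoOn_of_hasDerivWithinAt_pos hs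
    (fun x hx => (hφ x hx).continuousAt.continuousWithinAt)
    (fun x hx => (hφ x (interior_subset hx)).hasDerivWithinAt) fun x hx => ?_
  have hqx := hq x (interior_subset hx)
  have h1 := sin_sq_le_one (φ x)
  have h0 := sq_nonneg (sin (φ x))
  rw [sub_pos, div_mul_eq_mul_div, div_lt_iff₀ hz]
  rcases le_total 0 (q x) with hq0 | hq0 <;> nlinarith

lemma StrictMonoOn.monotoneOn_of_rightInvOn {α β : Type*} [LinearOrder α] [Preorder β]
    {φ : α → β} {ψ : β → α} {s : Set α} {t : Set β} (hφ : StrictMonoOn φ s)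
    (hψ : MapsTo ψ t s) (hinv : RightInvOn ψ φ t) : MonotoneOn ψ t := fun _ hy _ hy' h => by
  rwa [← hφ.le_iff_le (hψ hy) (hψ hy'), hinv hy, hinv hy']

theorem substituted_integral_lower_bound_general
    (x₀ : ℝ)
    (q : ℝ → ℝ)
    (hqnonneg : ∀ x ∈ Icc 0 x₀, 0 ≤ q x)
    (hmono : MonotoneOn q (Icc 0 x₀))
    (z : ℝ) (hz : 0 < z) (hsup : q x₀ < z ^ 2)
    (φ : ℝ → ℝ)
    (hφODE : ∀ x ∈ Icc 0 x₀, HasDerivAt φ (z - q x / z * Real.sin (φ x) ^ 2) x)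
    (i : ℕ) (D : ℝ) (hD : D ∈ Icc (π / 2) π)
    (a b : ℝ) (ha : a ∈ Ioc 0 x₀) (hb : b ∈ Ioc 0 x₀)
    (hφa : φ a = i * π + π / 2) (hφb : φ b = i * π + π / 2 + D)
    (ψ : ℝ → ℝ)
    (hψ : ∀ t ∈ Icc (φ a) (φ b), ψ t ∈ Icc a b ∧ φ (ψ t) = t) :
    (∫ t in (-(π / 2))..(-(π / 2) + D),
        (q (ψ (t + ((i : ℝ) + 1) * π)) / z ^ 2) *
          (Real.sin t ^ 2 - t * Real.sin t * Real.cos t) /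
          (1 - (q (ψ (t + ((i : ℝ) + 1) * π)) / z ^ 2) * Real.sin t ^ 2)) ≥
      π / 4 * ((q a / z ^ 2) / (1 - 3 / 4 * (q a / z ^ 2)))
        + π / 4 * Real.log (1 - q a / z ^ 2)
        - π / 6 * Real.log (1 - 3 / 4 * (q a / z ^ 2)) := by
  have hz2 : 0 < z ^ 2 := by positivity
  have ha₀ : a ∈ Icc 0 x₀ := Ioc_subset_Icc_self ha
  have hx₀ : x₀ ∈ Icc 0 x₀ := ⟨ha.1.le.trans ha.2, le_rfl⟩
  have hab₀ : Icc a b ⊆ Icc 0 x₀ := Icc_subset_Icc ha.1.le hb.2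
  have hψab : MapsTo ψ (Icc (φ a) (φ b)) (Icc a b) := fun t ht => (hψ t ht).1
  have hψ_mono : MonotoneOn ψ (Icc (φ a) (φ b)) :=
    (strictMonoOn_of_hasDerivAt_pruferAngle (convex_Icc 0 x₀) hz
      (fun x hx => (hmono hx hx₀ hx.2).trans_lt hsup) hφODE).monotoneOn_of_rightInvOn
      (hψab.mono_right hab₀) fun t ht => (hψ t ht).2
  have hshift : MapsTo (· + ((i : ℝ) + 1) * π) (Icc (-(π / 2)) (-(π / 2) + D))
      (Icc (φ a) (φ b)) := fun t ht => by
    rw [hφa, hφb]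
    constructor <;> linarith [ht.1, ht.2]
  have hmem : MapsTo (fun t => ψ (t + ((i : ℝ) + 1) * π)) (Icc (-(π / 2)) (-(π / 2) + D))
      (Icc a b) := hψab.comp hshift
  have hP : MonotoneOn (fun t => q (ψ (t + ((i : ℝ) + 1) * π)) / z ^ 2)
      (Icc (-(π / 2)) (-(π / 2) + D)) := fun s hs t ht hst =>
    div_le_div_of_nonneg_right (hmono (hab₀ (hmem hs)) (hab₀ (hmem ht))
      (hψ_mono (hshift hs) (hshift ht) (by simpa using hst))) hz2.le
  refine le_integral_substitutedIntegrand (div_nonneg (hqnonneg a ha₀) hz2.le)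
    ((div_lt_one hz2).2 hsup) hD (aemeasurable_restrict_of_monotoneOn measurableSet_Icc hP)
    fun t ht => ⟨?_, ?_⟩
  · exact div_le_div_of_nonneg_right (hmono ha₀ (hab₀ (hmem ht)) (hmem ht).1) hz2.le
  · exact div_le_div_of_nonneg_right (hmono (hab₀ (hmem ht)) hx₀ (hab₀ (hmem ht)).2) hz2.le

/-- Lemma 3.4 ii): lower bound for the substituted integrand with the
monotone factor sin²t − t·sin t·cos t. -/
theorem substituted_integral_lower_bound
    (x₀ : ℝ) (hx₀ : 0 < x₀)
    (q : ℝ → ℝ) (hqc : ContinuousOn q (Icc 0 x₀))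
    (hqnonneg : ∀ x ∈ Icc 0 x₀, 0 ≤ q x)
    (hmono : MonotoneOn q (Icc 0 x₀))
    (z : ℝ) (hz : 0 < z) (hsup : q x₀ < z ^ 2)
    (φ : ℝ → ℝ) (hφ0 : φ 0 = 0)
    (hφODE : ∀ x ∈ Icc 0 x₀, HasDerivAt φ (z - q x / z * Real.sin (φ x) ^ 2) x)
    (i : ℕ) (D : ℝ) (hD : D ∈ Icc (π / 2) π)
    (a b : ℝ) (ha : a ∈ Ioc 0 x₀) (hb : b ∈ Ioc 0 x₀) (hab : a ≤ b)
    (hφa : φ a = i * π + π / 2) (hφb : φ b = i * π + π / 2 + D)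
    (ψ : ℝ → ℝ)
    (hψ : ∀ t ∈ Icc (φ a) (φ b), ψ t ∈ Icc a b ∧ φ (ψ t) = t) :
    (∫ t in (-(π / 2))..(-(π / 2) + D),
        (q (ψ (t + ((i : ℝ) + 1) * π)) / z ^ 2) *
          (Real.sin t ^ 2 - t * Real.sin t * Real.cos t) /
          (1 - (q (ψ (t + ((i : ℝ) + 1) * π)) / z ^ 2) * Real.sin t ^ 2)) ≥
      π / 4 * ((q a / z ^ 2) / (1 - 3 / 4 * (q a / z ^ 2)))
        + π / 4 * Real.log (1 - q a / z ^ 2)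
        - π / 6 * Real.log (1 - 3 / 4 * (q a / z ^ 2)) :=
  substituted_integral_lower_bound_general x₀ q hqnonneg hmono z hz hsup φ hφODE i D hD a b ha hb
    hφa hφb ψ hψ
end

section
/- Define G : [0, 1/11] → ℝ by G(s) = (s/(4·(1 − (3/4)s)))·(1 − log(1 − (3/4)s)) + ((1 + s)·log(1 − s))/(4·(1 − s)) − (1/6)·log(1 − (3/4)s). Then G(s) ≥ s/10 for all s ∈ [0, 1/11]. -/
open Real Set

/-!
The logarithms enter `G` with coefficients of fixed sign (`log (1 - 3 / 4 * s)` negatively,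
`log (1 - s)` positively), so it suffices to bound `-log (1 - t) = ∑ tⁿ⁺¹ / (n + 1)` from below by
`t + t² / 2` and from above by `t + t² / (2 (1 - t))`, dominating the tail by a geometric series.
What remains is a rational function of `s` whose numerator `s (12 - 261 / 2 s + …)` is nonnegative
on `[0, 1 / 11]`.
-/

namespace Real

theorem add_sq_div_two_le_neg_log_one_sub {t : ℝ} (ht₀ : 0 ≤ t) (ht₁ : t < 1) :
    t + t ^ 2 / 2 ≤ -log (1 - t) := by
  have hsum := hasSum_pow_div_log_of_abs_lt_one (abs_lt.2 ⟨by linarith, ht₁⟩)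
  have h := sum_le_hasSum (Finset.range 2) (fun n _ => by positivity) hsum
  norm_num [Finset.sum_range_succ] at h
  linarith

theorem neg_log_one_sub_le_add_sq_div {t : ℝ} (ht₀ : 0 ≤ t) (ht₁ : t < 1) :
    -log (1 - t) ≤ t + t ^ 2 / (2 * (1 - t)) := by
  have hsum := hasSum_pow_div_log_of_abs_lt_one (abs_lt.2 ⟨by linarith, ht₁⟩)
  have htail : HasSum (fun n : ℕ => t ^ (n + 2) / (n + 2)) (-log (1 - t) - t) := by
    have := (hasSum_nat_add_iff' 1).2 hsum
    simpa [Finset.sum_range_one, add_assoc, one_add_one_eq_two] using this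
  have hgeom : HasSum (fun n : ℕ => t ^ 2 / 2 * t ^ n) (t ^ 2 / 2 * (1 - t)⁻¹) :=
    (hasSum_geometric_of_lt_one ht₀ ht₁).mul_left _
  have hle := hasSum_le (fun n => ?_) htail hgeom
  · rw [show t ^ 2 / (2 * (1 - t)) = t ^ 2 / 2 * (1 - t)⁻¹ by field_simp]
    linarith
  · calc t ^ (n + 2) / (n + 2) ≤ t ^ (n + 2) / 2 := by
          gcongr
          linarith [n.cast_nonneg (α := ℝ)]
      _ = t ^ 2 / 2 * t ^ n := by ring

end Real

/-- `G` with both logarithms replaced by the bounds above. -/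
theorem div_ten_le_rational_minorant {s : ℝ} (hs₀ : 0 ≤ s) (hs₁ : s ≤ 1 / 11) :
    s / 10 ≤ s / (4 * (1 - 3 / 4 * s)) * (1 - -(3 / 4 * s + (3 / 4 * s) ^ 2 / 2))
      + (1 + s) * -(s + s ^ 2 / (2 * (1 - s))) / (4 * (1 - s))
      - 1 / 6 * -(3 / 4 * s + (3 / 4 * s) ^ 2 / 2) := by
  have h₁ : 1 - s ≠ 0 := by linarith
  have h₂ : 4 - s * 3 ≠ 0 := by linarith
  rw [← sub_nonneg]
  have key : s / (4 * (1 - 3 / 4 * s)) * (1 - -(3 / 4 * s + (3 / 4 * s) ^ 2 / 2))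
      + (1 + s) * -(s + s ^ 2 / (2 * (1 - s))) / (4 * (1 - s))
      - 1 / 6 * -(3 / 4 * s + (3 / 4 * s) ^ 2 / 2) - s / 10
      = s * (12 - 261 / 2 * s + 375 / 8 * s ^ 2 + 99 / 4 * s ^ 3 + 135 / 8 * s ^ 4)
          / (480 * (1 - 3 / 4 * s) * (1 - s) ^ 2) := by
    field_simp
    ring
  rw [key]
  -- `12 - 261 / 2 * s` is still positive at `s = 1 / 11`; the remaining terms are nonnegative.
  have hquartic : 0 ≤ 12 - 261 / 2 * s + 375 / 8 * s ^ 2 + 99 / 4 * s ^ 3 + 135 / 8 * s ^ 4 := by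
    linarith [pow_nonneg hs₀ 2, pow_nonneg hs₀ 3, pow_nonneg hs₀ 4]
  have hden : 0 ≤ 480 * (1 - 3 / 4 * s) * (1 - s) ^ 2 :=
    mul_nonneg (by linarith) (sq_nonneg _)
  exact div_nonneg (mul_nonneg hs₀ hquartic) hden

/-- The function G(s) appearing in the monotonicity proof satisfies
G(s) ≥ s/10 on [0, 1/11]. -/
theorem G_lower_bound :
    ∀ s ∈ Icc (0:ℝ) (1 / 11),
      s / (4 * (1 - 3 / 4 * s)) * (1 - Real.log (1 - 3 / 4 * s))
          + (1 + s) * Real.log (1 - s) / (4 * (1 - s))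
          - 1 / 6 * Real.log (1 - 3 / 4 * s) ≥ s / 10 := by
  rintro s ⟨hs₀, hs₁⟩
  have hA := Real.add_sq_div_two_le_neg_log_one_sub (t := 3 / 4 * s) (by positivity) (by linarith)
  have hB := Real.neg_log_one_sub_le_add_sq_div hs₀ (by linarith)
  have h₁ : 0 ≤ 1 - 3 / 4 * s := by linarith
  refine (div_ten_le_rational_minorant hs₀ hs₁).trans ?_
  gcongr
  all_goals linarith
end

section
/- Let q : [0,1] → ℝ be continuous and nonnegative and define the reversed potential q̃(x) = q(1 − x). Let z > 0 and n ≥ 1 be an integer, let φ be the Prüfer angle of q at z, and let φ̃ be the Prüfer angle of q̃ at z. If φ(1) = nπ (i.e. z² is the n-th Dirichlet eigenvalue), then φ̃(x) = nπ − φ(1 − x) for all x ∈ [0,1]; in particular the scaled angles satisfy θ̃(x,z) = nπ/z − θ(1 − x, z). -/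
open Real Set

lemma sin_sq_lip (a b : ℝ) : |Real.sin a ^ 2 - Real.sin b ^ 2| ≤ 2 * |a - b| := by
  have h1 : Real.sin a ^ 2 - Real.sin b ^ 2
      = (Real.sin a - Real.sin b) * (Real.sin a + Real.sin b) := by ring
  rw [h1, abs_mul]
  have h2 : |Real.sin a - Real.sin b| ≤ |a - b| := by
    rw [Real.sin_sub_sin, abs_mul, abs_mul]
    have := Real.abs_sin_le_abs (x := (a - b) / 2)
    have hc := Real.abs_cos_le_one ((a + b) / 2)
    calc |(2:ℝ)| * |Real.sin ((a - b) / 2)| * |Real.cos ((a + b) / 2)|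
        ≤ |(2:ℝ)| * |(a - b) / 2| * 1 := by
          apply mul_le_mul (by apply mul_le_mul_of_nonneg_left this (abs_nonneg _)) hc
            (abs_nonneg _) (by positivity)
      _ = |a - b| := by
          rw [abs_div, abs_two]
          ring
  have h3 : |Real.sin a + Real.sin b| ≤ 2 := by
    calc |Real.sin a + Real.sin b| ≤ |Real.sin a| + |Real.sin b| := abs_add_le _ _
      _ ≤ 1 + 1 := add_le_add (Real.abs_sin_le_one a) (Real.abs_sin_le_one b)
      _ = 2 := by norm_num
  calc |Real.sin a - Real.sin b| * |Real.sin a + Real.sin b|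
      ≤ |a - b| * 2 := mul_le_mul h2 h3 (abs_nonneg _) (abs_nonneg _)
    _ = 2 * |a - b| := mul_comm _ _

/-- Relation between the Prüfer angle of q and of the reversed potential
q̃(x) = q(1−x) at an eigenvalue: φ̃(x) = nπ − φ(1−x); in particular
θ̃(x,z) = nπ/z − θ(1−x,z). -/
theorem reversed_potential_prufer_angle
    (q : ℝ → ℝ) (hqc : ContinuousOn q (Icc 0 1))
    (hqnonneg : ∀ x ∈ Icc (0:ℝ) 1, 0 ≤ q x)
    (z : ℝ) (hz : 0 < z) (n : ℕ) (hn : 1 ≤ n)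
    (φ : ℝ → ℝ) (hφ0 : φ 0 = 0)
    (hφODE : ∀ x ∈ Icc (0:ℝ) 1, HasDerivAt φ (z - q x / z * Real.sin (φ x) ^ 2) x)
    (φt : ℝ → ℝ) (hφt0 : φt 0 = 0)
    (hφtODE : ∀ x ∈ Icc (0:ℝ) 1,
      HasDerivAt φt (z - q (1 - x) / z * Real.sin (φt x) ^ 2) x)
    (hφ1 : φ 1 = n * π) :
    (∀ x ∈ Icc (0:ℝ) 1, φt x = n * π - φ (1 - x)) ∧
      ∀ x ∈ Icc (0:ℝ) 1, φt x / z = n * π / z - φ (1 - x) / z := by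
  -- bound on q
  obtain ⟨C, hC⟩ := (isCompact_Icc (a := (0:ℝ)) (b := 1)).exists_bound_of_continuousOn hqc
  set C' : ℝ := max C 0 with hC'def
  have hC'0 : 0 ≤ C' := le_max_right _ _
  have hCb : ∀ x ∈ Icc (0:ℝ) 1, |q x| ≤ C' := fun x hx =>
    (hC x hx).trans (le_max_left _ _)
  -- clamp
  set cl : ℝ → ℝ := fun t => min (max t 0) 1 with hcl
  have hclmem : ∀ t, cl t ∈ Icc (0:ℝ) 1 := fun t =>
    ⟨le_min (le_max_right _ _) zero_le_one, min_le_right _ _⟩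
  have hclid : ∀ t ∈ Icc (0:ℝ) 1, cl t = t := by
    intro t ht
    simp only [hcl]
    rw [max_eq_left ht.1, min_eq_left ht.2]
  -- the vector field
  set v : ℝ → ℝ → ℝ := fun t θ => z - q (1 - cl t) / z * Real.sin θ ^ 2 with hv
  set K : NNReal := ⟨2 * C' / z, by positivity⟩ with hK
  have hlip : ∀ t, LipschitzWith K (v t) := by
    intro t
    apply LipschitzWith.of_dist_le_mul
    intro a b
    have hmem : (1 - cl t) ∈ Icc (0:ℝ) 1 := by
      have := hclmem t
      constructor <;> [linarith [this.2]; linarith [this.1]]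
    have hq : |q (1 - cl t)| ≤ C' := hCb _ hmem
    simp only [hv, Real.dist_eq]
    have : z - q (1 - cl t) / z * Real.sin a ^ 2 - (z - q (1 - cl t) / z * Real.sin b ^ 2)
        = q (1 - cl t) / z * (Real.sin b ^ 2 - Real.sin a ^ 2) := by ring
    rw [this, abs_mul, abs_div]
    have h1 := sin_sq_lip b a
    have h2 : |q (1 - cl t)| / |z| * |Real.sin b ^ 2 - Real.sin a ^ 2|
        ≤ C' / z * (2 * |b - a|) := by
      rw [abs_of_pos hz]
      apply mul_le_mul (by gcongr) h1 (abs_nonneg _) (by positivity)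
    refine h2.trans (le_of_eq ?_)
    have : |b - a| = |a - b| := abs_sub_comm _ _
    rw [this]
    show C' / z * (2 * |a - b|) = (2 * C' / z) * |a - b|
    ring
  -- define ψ
  set ψ : ℝ → ℝ := fun x => n * π - φ (1 - x) with hψ
  have hψ0 : ψ 0 = 0 := by simp [hψ, hφ1]
  -- sin² invariance
  have hsin : ∀ u : ℝ, Real.sin ((n : ℝ) * π - u) ^ 2 = Real.sin u ^ 2 := by
    intro u
    rw [Real.sin_sub, Real.sin_nat_mul_pi]
    have : Real.cos ((n : ℝ) * π) ^ 2 = 1 := by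
      have := Real.sin_sq_add_cos_sq ((n : ℝ) * π)
      rw [Real.sin_nat_mul_pi] at this
      nlinarith
    nlinarith [this]
  -- ψ solves the same ODE
  have hψODE : ∀ x ∈ Icc (0:ℝ) 1, HasDerivAt ψ (v x (ψ x)) x := by
    intro x hx
    have hx' : (1 - x) ∈ Icc (0:ℝ) 1 := ⟨by linarith [hx.2], by linarith [hx.1]⟩
    have h1 := hφODE (1 - x) hx'
    have h2 : HasDerivAt (fun x : ℝ => 1 - x) (-1) x := by
      simpa using (hasDerivAt_id x).const_sub 1
    have h3 := h1.comp x h2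
    have h4 : HasDerivAt ψ (-((z - q (1 - x) / z * Real.sin (φ (1 - x)) ^ 2) * (-1))) x := by
      simpa [hψ] using (h3.const_sub ((n : ℝ) * π))
    convert h4 using 1
    simp only [hv, hψ, hclid x hx, hsin (φ (1 - x))]
    ring
  have hφtODE' : ∀ x ∈ Icc (0:ℝ) 1, HasDerivAt φt (v x (φt x)) x := by
    intro x hx
    have := hφtODE x hx
    simpa [hv, hclid x hx] using this
  -- uniqueness
  have huniq : EqOn φt ψ (Icc 0 1) := by
    apply ODE_solution_unique (v := v) (K := K) hlip
    · intro x hx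
      exact (hφtODE' x hx).continuousAt.continuousWithinAt
    · intro x hx
      exact (hφtODE' x (Ico_subset_Icc_self hx)).hasDerivWithinAt
    · intro x hx
      exact (hψODE x hx).continuousAt.continuousWithinAt
    · intro x hx
      exact (hψODE x (Ico_subset_Icc_self hx)).hasDerivWithinAt
    · rw [hφt0, hψ0]
  constructor
  · intro x hx
    exact huniq hx
  · intro x hx
    rw [huniq hx]
    simp only [hψ]
    ring
end
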